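/- arXiv:2412.13095 — 16 statements merged into one kernel-verified Lean document; each statement's English description precedes it below -/
import Mathlib

section
/- Let u, v : ℝ → ℝ be n times differentiable on an interval I, and let x ∈ I with v(x) ≠ 0. Define w_n(x) as the determinant of the (n+1)×(n+1) lower Hessenberg matrix whose first column is (u, u', ..., u^{(n)}) evaluated at x, and whose (i,j) entry for j ≥ 2 is C(i-1, j-2) · v^{(i-j+1)}(x) when i-j+1 ≥ 0 and 0 otherwise. Then the n-th derivative of u/v at x equals (-1)^n w_n(x) / v(x)^{n+1}. -/
/-!
Writing `q = u / v`, Leibniz's rule applied to `u = q v` gives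
`u⁽ⁱ⁾ = ∑ₖ C(i,k) q⁽ᵏ⁾ v⁽ⁱ⁻ᵏ⁾` for `i ≤ n`. Hence the Hessenberg matrix factors as `L P`, where
`L = (C(i,k) v⁽ⁱ⁻ᵏ⁾)` is lower triangular with diagonal `v`, and `P` has first column
`(q, q', …, q⁽ⁿ⁾)` and ones on the superdiagonal. Expanding `det P` along its last row gives
`(-1)ⁿ q⁽ⁿ⁾`, so the determinant is `(-1)ⁿ vⁿ⁺¹ q⁽ⁿ⁾`.
-/

open Finset

theorem iteratedDeriv_eq_sum_iteratedDeriv_div_mul {𝕜 : Type*} [NontriviallyNormedField 𝕜]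
    {u v : 𝕜 → 𝕜} {x : 𝕜} {n : ℕ} (hu : ContDiffAt 𝕜 n u x) (hv : ContDiffAt 𝕜 n v x)
    (hvx : v x ≠ 0) :
    iteratedDeriv n u x = ∑ k ∈ range (n + 1),
      n.choose k * iteratedDeriv k (fun y => u y / v y) x * iteratedDeriv (n - k) v x := by
  have hu_eq : u =ᶠ[nhds x] fun y => u y / v y * v y := by
    filter_upwards [hv.continuousAt.eventually_ne hvx] with y hy
    rw [div_mul_cancel₀ _ hy]
  rw [hu_eq.iteratedDeriv_eq, iteratedDeriv_fun_mul (hu.fun_div hv hvx) hv]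

namespace Matrix

variable {R : Type*} [CommRing R]

-- Truncated subtraction in `b (i - k)` is harmless: `C(i,k) = 0` above the diagonal.
def leibnizMatrix (n : ℕ) (b : ℕ → R) : Matrix (Fin (n + 1)) (Fin (n + 1)) R :=
  of fun i k => ((i : ℕ).choose k : R) * b (i - k)

theorem det_leibnizMatrix (n : ℕ) (b : ℕ → R) : (leibnizMatrix n b).det = b 0 ^ (n + 1) := by
  rw [det_of_isLowerTriangular _ fun i k (hik : i < k) => by
    simp [leibnizMatrix, Nat.choose_eq_zero_of_lt (Fin.lt_def.mp hik)]]
  simp [leibnizMatrix]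

def firstColSuperdiagMatrix (n : ℕ) (a : ℕ → R) : Matrix (Fin (n + 1)) (Fin (n + 1)) R :=
  of fun k j => if (j : ℕ) = 0 then a k else if (k : ℕ) + 1 = j then 1 else 0

theorem det_firstColSuperdiagMatrix (n : ℕ) (a : ℕ → R) :
    (firstColSuperdiagMatrix n a).det = (-1) ^ n * a n := by
  rw [det_succ_row _ (Fin.last n), sum_eq_single_of_mem 0 (mem_univ 0)]
  · have h_minor : (firstColSuperdiagMatrix n a).submatrix Fin.castSucc Fin.succ = 1 := by
      ext i j
      simp only [firstColSuperdiagMatrix, submatrix_apply, of_apply, Fin.val_succ,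
        Fin.val_castSucc, one_apply, Nat.add_eq_zero_iff, one_ne_zero, and_false, if_false,
        add_left_inj, Fin.val_inj]
    simp only [Fin.succAbove_last, Fin.succAbove_zero, h_minor, det_one]
    simp [firstColSuperdiagMatrix]
  · intro j _ hj
    have hj' : (j : ℕ) ≠ 0 := fun h => hj (Fin.ext h)
    simp only [firstColSuperdiagMatrix, of_apply, Fin.val_last, if_neg hj']
    rw [if_neg (by omega), mul_zero, zero_mul]

theorem hessenberg_eq_leibnizMatrix_mul (n : ℕ) (a b c : ℕ → R)
    (hc : ∀ i ≤ n, c i = ∑ k ∈ range (i + 1), (i.choose k : R) * a k * b (i - k)) :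
    (of fun i j : Fin (n + 1) =>
      if (j : ℕ) = 0 then c i
      else if (j : ℕ) ≤ (i : ℕ) + 1 then ((i : ℕ).choose ((j : ℕ) - 1) : R) * b ((i : ℕ) + 1 - j)
      else 0) = leibnizMatrix n b * firstColSuperdiagMatrix n a := by
  ext i j
  simp only [mul_apply, leibnizMatrix, firstColSuperdiagMatrix, of_apply]
  by_cases hj : (j : ℕ) = 0
  · simp only [hj, if_true]
    calc c i = ∑ k ∈ range (n + 1), ((i : ℕ).choose k : R) * a k * b (i - k) := by
          rw [hc i (by omega)]
          refine sum_subset (range_subset_range.mpr i.isLt) fun k _ hk => ?_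
          rw [mem_range] at hk
          rw [Nat.choose_eq_zero_of_lt (by omega), Nat.cast_zero, zero_mul, zero_mul]
      _ = _ := by
          rw [← Fin.sum_univ_eq_sum_range]
          exact sum_congr rfl fun k _ => by ring
  · have hj' : (j : ℕ) - 1 < n + 1 := by omega
    rw [sum_eq_single_of_mem ⟨(j : ℕ) - 1, hj'⟩ (mem_univ _) fun k _ hk => ?_]
    · simp only [if_neg hj, show ((j : ℕ) - 1) + 1 = j by omega, if_true, mul_one]
      split_ifs with hji
      · rw [show (i : ℕ) - ((j : ℕ) - 1) = i + 1 - j by omega]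
      · rw [Nat.choose_eq_zero_of_lt (by omega), Nat.cast_zero, zero_mul]
    · rw [if_neg hj, if_neg fun h => hk (Fin.ext (by dsimp only; omega)), mul_zero]

theorem det_hessenberg_of_leibniz (n : ℕ) (a b c : ℕ → R)
    (hc : ∀ i ≤ n, c i = ∑ k ∈ range (i + 1), (i.choose k : R) * a k * b (i - k)) :
    (of fun i j : Fin (n + 1) =>
      if (j : ℕ) = 0 then c i
      else if (j : ℕ) ≤ (i : ℕ) + 1 then ((i : ℕ).choose ((j : ℕ) - 1) : R) * b ((i : ℕ) + 1 - j)
      else 0).det = (-1) ^ n * b 0 ^ (n + 1) * a n := by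
  rw [hessenberg_eq_leibnizMatrix_mul n a b c hc, det_mul, det_leibnizMatrix,
    det_firstColSuperdiagMatrix]
  ring

end Matrix

theorem deriv_quotient_det_general (n : ℕ) (u v : ℝ → ℝ) (I : Set ℝ)
    (hI : IsOpen I)
    (hu : ContDiffOn ℝ n u I) (hv : ContDiffOn ℝ n v I)
    (x : ℝ) (hx : x ∈ I) (hvx : v x ≠ 0) :
    iteratedDeriv n (fun y => u y / v y) x =
      (-1 : ℝ) ^ n *
        (Matrix.of fun i j : Fin (n + 1) =>
          if (j : ℕ) = 0 then iteratedDeriv i u x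
          else if (j : ℕ) ≤ (i : ℕ) + 1 then
            ((i : ℕ).choose ((j : ℕ) - 1) : ℝ) * iteratedDeriv ((i : ℕ) + 1 - (j : ℕ)) v x
          else 0).det / v x ^ (n + 1) := by
  have hu_at : ContDiffAt ℝ n u x := hu.contDiffAt (hI.mem_nhds hx)
  have hv_at : ContDiffAt ℝ n v x := hv.contDiffAt (hI.mem_nhds hx)
  rw [Matrix.det_hessenberg_of_leibniz n (fun k => iteratedDeriv k (fun y => u y / v y) x)
    (fun k => iteratedDeriv k v x) (fun k => iteratedDeriv k u x) fun i hi =>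
      iteratedDeriv_eq_sum_iteratedDeriv_div_mul (hu_at.of_le (by exact_mod_cast hi))
        (hv_at.of_le (by exact_mod_cast hi)) hvx, iteratedDeriv_zero]
  field_simp
  rw [← pow_mul, pow_mul', neg_one_sq, one_pow, mul_one]

/-- Determinantal formula for the `n`-th derivative of a quotient of two functions:
if `u, v` are `n` times continuously differentiable on an open interval `I`, `x ∈ I`
and `v x ≠ 0`, then `(u/v)^{(n)}(x) = (-1)^n wₙ(x) / v(x)^{n+1}`, where `wₙ(x)` is the
determinant of the `(n+1)×(n+1)` lower Hessenberg matrix whose first column is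
`(u, u', …, u^{(n)})` at `x` and whose `(i,j)` entry for `j ≥ 2` (1-based) is
`C(i-1, j-2)·v^{(i-j+1)}(x)` when `i-j+1 ≥ 0` and `0` otherwise. -/
theorem deriv_quotient_det (n : ℕ) (u v : ℝ → ℝ) (I : Set ℝ)
    (hI : IsOpen I) (hI' : I.OrdConnected)
    (hu : ContDiffOn ℝ n u I) (hv : ContDiffOn ℝ n v I)
    (x : ℝ) (hx : x ∈ I) (hvx : v x ≠ 0) :
    iteratedDeriv n (fun y => u y / v y) x =
      (-1 : ℝ) ^ n *
        (Matrix.of fun i j : Fin (n + 1) =>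
          if (j : ℕ) = 0 then iteratedDeriv i u x
          else if (j : ℕ) ≤ (i : ℕ) + 1 then
            ((i : ℕ).choose ((j : ℕ) - 1) : ℝ) * iteratedDeriv ((i : ℕ) + 1 - (j : ℕ)) v x
          else 0).det / v x ^ (n + 1) :=
  deriv_quotient_det_general n u v I hI hu hv x hx hvx
end

section
/- Let A_n(x) be the polynomials defined by A_0(x) = 1 and A_{n+1}(x) = (n+1)x·A_n(x) + x(1-x)·A_n'(x) (the Eulerian polynomials with A_n(x) = Σ_π x^{des(π)+1} for n ≥ 1). Then for all n ≥ 1, A_{n+1}(x) = A_n(x) + x · Σ_{r=2}^{n+1} C(n, r-2) (1-x)^{n-r+1} A_{r-1}(x). -/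
/-!
Write `L_c f = (c + 1) X f + X (1 - X) f'`, so that `A (n + 1) = L_n (A n)`. Multiplying by
`1 - X` shifts the index of this operator: `L_{c+1} ((1 - X) f) = (1 - X) L_c f`. Indexing the
sum of the theorem by `j = n + 1 - r`, it becomes `S_n = Σ_{j<n} C(n, j+1) (1 - X)^j A_{n-j}`,
and `L_n` maps each of its terms to `C(n, j+1) (1 - X)^j A_{n+1-j}`. Pascal's rule then gives
`S_{n+1} = A_{n+1} + (1 - X) S_n + L_n S_n`, with which `A_{n+1} = A_n + X S_n` propagates
from `n` to `n + 1`.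
-/

open Polynomial

namespace Eulerian

variable {R : Type*} [CommRing R]

noncomputable def eulerOp (c : ℕ) : R[X] →ₗ[R] R[X] :=
  LinearMap.mulLeft R (((c : R[X]) + 1) * X) + LinearMap.mulLeft R (X * (1 - X)) ∘ₗ derivative

theorem eulerOp_apply (c : ℕ) (f : R[X]) :
    eulerOp c f = ((c : R[X]) + 1) * X * f + X * (1 - X) * derivative f :=
  rfl

theorem eulerOp_succ (c : ℕ) (f : R[X]) : eulerOp (c + 1) f = eulerOp c f + X * f := by
  simp only [eulerOp_apply]
  push_cast
  ring

theorem eulerOp_X_mul (c : ℕ) (f : R[X]) :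
    eulerOp c (X * f) = X * (eulerOp c f + (1 - X) * f) := by
  simp only [eulerOp_apply, derivative_mul, derivative_X]
  ring

theorem eulerOp_succ_one_sub_X_mul (c : ℕ) (f : R[X]) :
    eulerOp (c + 1) ((1 - X) * f) = (1 - X) * eulerOp c f := by
  simp only [eulerOp_apply, derivative_mul, derivative_sub, derivative_one, derivative_X]
  push_cast
  ring

theorem eulerOp_add_one_sub_X_pow_mul (j m : ℕ) (f : R[X]) :
    eulerOp (j + m) ((1 - X) ^ j * f) = (1 - X) ^ j * eulerOp m f := by
  induction j with
  | zero => simp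
  | succ j ih =>
    rw [pow_succ', mul_assoc, Nat.add_right_comm, eulerOp_succ_one_sub_X_mul, ih, mul_assoc]

noncomputable def binomialSum (A : ℕ → R[X]) (n : ℕ) : R[X] :=
  ∑ j ∈ Finset.range n, n.choose (j + 1) • ((1 - X) ^ j * A (n - j))

section Recurrence

variable {A : ℕ → R[X]}

theorem eulerOp_binomialSum (hrec : ∀ n : ℕ, A (n + 1) = eulerOp n (A n)) (n : ℕ) :
    eulerOp n (binomialSum A n) =
      ∑ j ∈ Finset.range n, n.choose (j + 1) • ((1 - X) ^ j * A (n + 1 - j)) := by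
  rw [binomialSum, map_sum]
  refine Finset.sum_congr rfl fun j hj => ?_
  have hjn : j < n := Finset.mem_range.mp hj
  obtain ⟨m, rfl⟩ : ∃ m, n = j + m := ⟨n - j, by omega⟩
  rw [map_nsmul, eulerOp_add_one_sub_X_pow_mul, Nat.add_sub_cancel_left,
    show j + m + 1 - j = m + 1 by omega, hrec m]

theorem binomialSum_succ (hrec : ∀ n : ℕ, A (n + 1) = eulerOp n (A n)) (n : ℕ) :
    binomialSum A (n + 1) =
      A (n + 1) + (1 - X) * binomialSum A n + eulerOp n (binomialSum A n) := by
  have pascal : binomialSum A (n + 1) =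
      ∑ j ∈ Finset.range (n + 1), n.choose j • ((1 - X) ^ j * A (n + 1 - j)) +
        ∑ j ∈ Finset.range (n + 1), n.choose (j + 1) • ((1 - X) ^ j * A (n + 1 - j)) := by
    simp only [binomialSum, Nat.choose_succ_succ, add_smul, Finset.sum_add_distrib]
  have shifted : ∑ j ∈ Finset.range (n + 1), n.choose j • ((1 - X) ^ j * A (n + 1 - j)) =
      A (n + 1) + (1 - X) * binomialSum A n := by
    rw [Finset.sum_range_succ', binomialSum, Finset.mul_sum, add_comm]
    simp only [pow_succ', Nat.choose_zero_right, one_smul, pow_zero, one_mul, mul_smul_comm,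
      mul_assoc, Nat.sub_zero, Nat.add_sub_add_right]
  rw [pascal, shifted, eulerOp_binomialSum hrec, Finset.sum_range_succ,
    Nat.choose_succ_self, zero_smul, add_zero]

theorem eq_add_X_mul_binomialSum (hrec : ∀ n : ℕ, A (n + 1) = eulerOp n (A n)) (h0 : A 0 = 1)
    (n : ℕ) (hn : 1 ≤ n) :
    A (n + 1) = A n + X * binomialSum A n := by
  induction n, hn using Nat.le_induction with
  | base =>
    have hA1 : A 1 = X := by simp [hrec 0, h0, eulerOp_apply]
    simp [hrec 1, hA1, binomialSum, eulerOp_apply]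
    ring
  | succ n _ ih =>
    calc A (n + 1 + 1) = eulerOp (n + 1) (A n + X * binomialSum A n) := by rw [hrec, ih]
      _ = A (n + 1) + X * (A n + X * binomialSum A n + (1 - X) * binomialSum A n
            + eulerOp n (binomialSum A n)) := by
        rw [map_add, eulerOp_succ, eulerOp_X_mul, eulerOp_succ, ← hrec]
        ring
      _ = A (n + 1) + X * binomialSum A (n + 1) := by
        rw [← ih, binomialSum_succ hrec]

end Recurrence

theorem sum_Icc_eq_binomialSum (A : ℕ → R[X]) (n : ℕ) :
    ∑ r ∈ Finset.Icc 2 (n + 1), (n.choose (r - 2) : R[X]) * (1 - X) ^ (n + 1 - r) * A (r - 1) =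
      binomialSum A n := by
  refine Finset.sum_nbij' (fun r => n + 1 - r) (fun j => n + 1 - j) ?_ ?_ ?_ ?_ ?_
  · intro r hr
    simp only [Finset.mem_Icc] at hr
    simp only [Finset.mem_range]
    omega
  · intro j hj
    simp only [Finset.mem_range] at hj
    simp only [Finset.mem_Icc]
    omega
  · intro r hr
    simp only [Finset.mem_Icc] at hr
    omega
  · intro j hj
    simp only [Finset.mem_range] at hj
    omega
  · intro r hr
    simp only [Finset.mem_Icc] at hr
    rw [nsmul_eq_mul, mul_assoc,
      Nat.choose_symm_of_eq_add (show n = r - 2 + (n + 1 - r + 1) by omega),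
      show n - (n + 1 - r) = r - 1 by omega]

end Eulerian

open Eulerian in
/-- The Eulerian polynomials, defined by `A 0 = 1` and
`A_{n+1} = (n+1)x·A_n + x(1-x)·A_n'`, satisfy for `n ≥ 1`:
`A_{n+1}(x) = A_n(x) + x · Σ_{r=2}^{n+1} C(n, r-2) (1-x)^{n-r+1} A_{r-1}(x)`. -/
theorem eulerian_recurrence (A : ℕ → Polynomial ℝ) (h0 : A 0 = 1)
    (hrec : ∀ n : ℕ, A (n + 1) =
      ((n : Polynomial ℝ) + 1) * X * A n + X * (1 - X) * derivative (A n))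
    (n : ℕ) (hn : 1 ≤ n) :
    A (n + 1) = A n + X * ∑ r ∈ Finset.Icc 2 (n + 1),
      (n.choose (r - 2) : Polynomial ℝ) * (1 - X) ^ (n + 1 - r) * A (r - 1) := by
  rw [sum_Icc_eq_binomialSum]
  exact eq_add_X_mul_binomialSum hrec h0 n hn
end

section
/- For n ≥ 1, the Eulerian polynomial A_{n+1}(x) equals the determinant of the (n+1)×(n+1) lower Hessenberg matrix M whose first column is (x, A_1(x), A_2(x), ..., A_n(x))^T, whose superdiagonal entries M_{i,i+1} are all -1, and whose entries M_{i,j} for 2 ≤ j ≤ i are C(i-1, j-2) · x(1-x)^{i-j}. -/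
open Polynomial Finset Matrix

noncomputable def Fs (A : ℕ → Polynomial ℝ) (m : ℕ) : Polynomial ℝ :=
  ∑ j ∈ Finset.range m, ((m.choose j : ℕ) : Polynomial ℝ) * (1 - X) ^ (m - 1 - j) * A (j + 1)

lemma hpow (k : ℕ) :
    ((k : Polynomial ℝ)) * (1 - X) ^ (k - 1) * (1 - X) = (k : Polynomial ℝ) * (1 - X) ^ k := by
  cases k with
  | zero => simp
  | succ k => rw [Nat.add_sub_cancel, pow_succ]; ring

lemma Glem (A : ℕ → Polynomial ℝ)
    (hrec : ∀ n : ℕ, A (n + 1) =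
      ((n : Polynomial ℝ) + 1) * X * A n + X * (1 - X) * derivative (A n))
    (m : ℕ) :
    ∑ j ∈ Finset.range m, ((m.choose j : ℕ) : Polynomial ℝ) * (1 - X) ^ (m - 1 - j) * A (j + 2)
      = ((m : Polynomial ℝ) + 1) * X * Fs A m + X * (1 - X) * derivative (Fs A m) := by
  rw [Fs, derivative_sum, Finset.mul_sum, Finset.mul_sum, ← Finset.sum_add_distrib]
  refine Finset.sum_congr rfl fun j hj => ?_
  have hj' : j < m := Finset.mem_range.mp hj
  have hm : ((m : Polynomial ℝ) + 1) = ((m - 1 - j : ℕ) : Polynomial ℝ) + ((j : Polynomial ℝ) + 2) := by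
    have h : m + 1 = (m - 1 - j) + (j + 2) := by omega
    have := congrArg (fun t : ℕ => (t : Polynomial ℝ)) h
    push_cast at this
    exact this
  have hd : derivative (((m.choose j : ℕ) : Polynomial ℝ) * (1 - X) ^ (m - 1 - j) * A (j + 1))
      = ((m.choose j : ℕ) : Polynomial ℝ) *
          ((-(((m - 1 - j : ℕ)) : Polynomial ℝ) * (1 - X) ^ (m - 1 - j - 1)) * A (j + 1)
            + (1 - X) ^ (m - 1 - j) * derivative (A (j + 1))) := by
    rw [derivative_mul, derivative_mul, derivative_natCast, derivative_pow]
    simp [derivative_X]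
    ring
  rw [hrec (j + 1), hd]
  have hp := hpow (m - 1 - j)
  rw [hm]
  linear_combination (norm := (push_cast; ring1)) (X * ((m.choose j : ℕ) : Polynomial ℝ) * A (j + 1)) * hp

lemma L1 (A : ℕ → Polynomial ℝ)
    (hrec : ∀ n : ℕ, A (n + 1) =
      ((n : Polynomial ℝ) + 1) * X * A n + X * (1 - X) * derivative (A n))
    (m : ℕ) :
    Fs A (m + 1) = (1 - X) * Fs A m + A (m + 1)
      + (((m : Polynomial ℝ) + 1) * X * Fs A m + X * (1 - X) * derivative (Fs A m)) := by
  rw [← Glem A hrec m]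
  have e2 : (1 - X) * Fs A m + A (m + 1)
      = ∑ j ∈ Finset.range (m + 1),
          ((m.choose j : ℕ) : Polynomial ℝ) * (1 - X) ^ (m - j) * A (j + 1) := by
    rw [Fs, Finset.mul_sum, Finset.sum_range_succ, Nat.choose_self, Nat.sub_self]
    simp only [Nat.cast_one, pow_zero, one_mul, mul_one]
    congr 1
    refine Finset.sum_congr rfl fun j hj => ?_
    have hj' : j < m := Finset.mem_range.mp hj
    rw [show m - j = (m - 1 - j) + 1 by omega, pow_succ]
    ring
  rw [e2]
  have e1 : Fs A (m + 1)
      = ∑ j ∈ Finset.range m,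
          (((m + 1).choose (j + 1) : ℕ) : Polynomial ℝ) * (1 - X) ^ (m - (j + 1)) * A (j + 2)
        + (1 - X) ^ m * A 1 := by
    rw [Fs, Finset.sum_range_succ']
    simp only [Nat.choose_zero_right, Nat.cast_one, one_mul, Nat.add_sub_cancel, Nat.sub_zero]
  have e3 : ∑ j ∈ Finset.range (m + 1),
        ((m.choose j : ℕ) : Polynomial ℝ) * (1 - X) ^ (m - j) * A (j + 1)
      = ∑ j ∈ Finset.range m,
          ((m.choose (j + 1) : ℕ) : Polynomial ℝ) * (1 - X) ^ (m - (j + 1)) * A (j + 2)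
        + (1 - X) ^ m * A 1 := by
    rw [Finset.sum_range_succ']
    simp only [Nat.choose_zero_right, Nat.cast_one, one_mul, Nat.sub_zero]
  rw [e1, e3]
  have e4 : ∑ j ∈ Finset.range m,
        (((m + 1).choose (j + 1) : ℕ) : Polynomial ℝ) * (1 - X) ^ (m - (j + 1)) * A (j + 2)
      = ∑ j ∈ Finset.range m,
          ((m.choose (j + 1) : ℕ) : Polynomial ℝ) * (1 - X) ^ (m - (j + 1)) * A (j + 2)
        + ∑ j ∈ Finset.range m,
          ((m.choose j : ℕ) : Polynomial ℝ) * (1 - X) ^ (m - 1 - j) * A (j + 2) := by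
    rw [← Finset.sum_add_distrib]
    refine Finset.sum_congr rfl fun j hj => ?_
    have hj' : j < m := Finset.mem_range.mp hj
    rw [Nat.choose_succ_succ, show m - 1 - j = m - (j + 1) by omega]
    push_cast
    ring
  rw [e4]
  ring

lemma key (A : ℕ → Polynomial ℝ) (h0 : A 0 = 1)
    (hrec : ∀ n : ℕ, A (n + 1) =
      ((n : Polynomial ℝ) + 1) * X * A n + X * (1 - X) * derivative (A n)) :
    ∀ m : ℕ, 1 ≤ m → X * Fs A m = A (m + 1) - A m := by
  have hA1 : A 1 = X := by
    have := hrec 0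
    simp [h0] at this
    simpa using this
  intro m hm
  induction m, hm using Nat.le_induction with
  | base =>
      rw [Fs]
      simp [hA1]
      rw [hrec 1, hA1]
      simp [derivative_X]
      ring
  | succ m hm ih =>
      have dih := congrArg derivative ih
      rw [derivative_mul, derivative_X, derivative_sub] at dih
      rw [L1 A hrec m]
      linear_combination (norm := (push_cast; ring1)) (((m : Polynomial ℝ)) + 1) * X * ih
        + X * (1 - X) * dih + hrec m - hrec (m + 1)

noncomputable def ent (A : ℕ → Polynomial ℝ) (k j : ℕ) : Polynomial ℝ :=
  (if j = 0 then (if k = 0 then X else A k)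
   else if j = k + 1 then -1
   else if j ≤ k then ((k.choose (j - 1) : ℕ) : Polynomial ℝ) * X * (1 - X) ^ (k - j)
   else 0) * (if j = 0 then 1 else A j)

lemma head (A : ℕ → Polynomial ℝ) (h0 : A 0 = 1)
    (hrec : ∀ n : ℕ, A (n + 1) =
      ((n : Polynomial ℝ) + 1) * X * A n + X * (1 - X) * derivative (A n))
    (k : ℕ) : ∑ j ∈ Finset.range (k + 1), ent A k j = A (k + 1) := by
  have hA1 : A 1 = X := by
    have := hrec 0
    simp [h0] at this
    simpa using this
  rcases Nat.eq_zero_or_pos k with hk | hk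
  · subst hk
    simp [ent, hA1]
  · rw [Finset.sum_range_succ']
    have hmid : ∑ t ∈ Finset.range k, ent A k (t + 1) = X * Fs A k := by
      rw [Fs, Finset.mul_sum]
      refine Finset.sum_congr rfl fun t ht => ?_
      have ht' : t < k := Finset.mem_range.mp ht
      have h1 : t + 1 ≠ 0 := Nat.succ_ne_zero t
      have h2 : t + 1 ≠ k + 1 := by omega
      have h3 : t + 1 ≤ k := ht'
      rw [ent, if_neg h1, if_neg h2, if_pos h3, if_neg h1, Nat.add_sub_cancel,
        show k - (t + 1) = k - 1 - t by omega]
      ring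
    have hz : ent A k 0 = A k := by
      rw [ent, if_pos rfl, if_pos rfl, if_neg (by omega : ¬ k = 0), mul_one]
    rw [hmid, hz, key A h0 hrec k hk]
    ring

lemma rowsum (A : ℕ → Polynomial ℝ) (h0 : A 0 = 1)
    (hrec : ∀ n : ℕ, A (n + 1) =
      ((n : Polynomial ℝ) + 1) * X * A n + X * (1 - X) * derivative (A n))
    (n k : ℕ) (hk : k ≤ n) :
    ∑ j ∈ Finset.range (n + 1), ent A k j = if k = n then A (n + 1) else 0 := by
  by_cases hkn : k = n
  · subst hkn
    rw [if_pos rfl]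
    exact head A h0 hrec k
  · rw [if_neg hkn]
    have hlt : k < n := lt_of_le_of_ne hk hkn
    have hsub : ∑ j ∈ Finset.range (n + 1), ent A k j
        = ∑ j ∈ Finset.range (k + 2), ent A k j := by
      refine (Finset.sum_subset (Finset.range_subset_range.mpr (by omega)) fun j hj hj2 => ?_).symm
      have hj' : k + 2 ≤ j := by
        simp only [Finset.mem_range] at hj2
        omega
      rw [ent, if_neg (by omega : ¬ j = 0), if_neg (by omega : ¬ j = k + 1),
        if_neg (by omega : ¬ j ≤ k), zero_mul]
    rw [hsub, Finset.sum_range_succ, head A h0 hrec k]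
    have : ent A k (k + 1) = -A (k + 1) := by
      rw [ent, if_neg (Nat.succ_ne_zero k), if_pos rfl, if_neg (Nat.succ_ne_zero k)]
      ring
    rw [this]
    ring


/-- For `n ≥ 1`, the Eulerian polynomial `A_{n+1}` equals the determinant of the
`(n+1)×(n+1)` lower Hessenberg matrix whose first column is `(x, A_1, …, A_n)ᵀ`,
whose superdiagonal entries are `-1`, and whose `(i,j)` entry for `2 ≤ j ≤ i`
(1-based) is `C(i-1, j-2)·x(1-x)^{i-j}`. -/
theorem eulerian_det (A : ℕ → Polynomial ℝ) (h0 : A 0 = 1)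
    (hrec : ∀ n : ℕ, A (n + 1) =
      ((n : Polynomial ℝ) + 1) * X * A n + X * (1 - X) * derivative (A n))
    (n : ℕ) (hn : 1 ≤ n) :
    A (n + 1) =
      (Matrix.of fun i j : Fin (n + 1) =>
        if (j : ℕ) = 0 then (if (i : ℕ) = 0 then X else A i)
        else if (j : ℕ) = (i : ℕ) + 1 then -1
        else if (j : ℕ) ≤ (i : ℕ) then
          ((i : ℕ).choose ((j : ℕ) - 1) : Polynomial ℝ) * X * (1 - X) ^ ((i : ℕ) - (j : ℕ))
        else 0).det := by
  set M : Matrix (Fin (n + 1)) (Fin (n + 1)) (Polynomial ℝ) :=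
    Matrix.of fun i j : Fin (n + 1) =>
      if (j : ℕ) = 0 then (if (i : ℕ) = 0 then X else A i)
      else if (j : ℕ) = (i : ℕ) + 1 then -1
      else if (j : ℕ) ≤ (i : ℕ) then
        ((i : ℕ).choose ((j : ℕ) - 1) : Polynomial ℝ) * X * (1 - X) ^ ((i : ℕ) - (j : ℕ))
      else 0 with hM
  set c : Fin (n + 1) → Polynomial ℝ := fun j => if (j : ℕ) = 0 then 1 else A j with hc
  have hMc : M *ᵥ c = fun i : Fin (n + 1) => if (i : ℕ) = n then A (n + 1) else 0 := by
    funext i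
    have step1 : (M *ᵥ c) i = ∑ j : Fin (n + 1), ent A (i : ℕ) (j : ℕ) := by
      simp only [Matrix.mulVec, dotProduct, hM, hc, Matrix.of_apply]
      exact Finset.sum_congr rfl fun j _ => rfl
    rw [step1, Fin.sum_univ_eq_sum_range (fun j => ent A (i : ℕ) j) (n + 1),
      rowsum A h0 hrec n i (by omega : (i : ℕ) ≤ n)]
  have h1 : M.adjugate *ᵥ (M *ᵥ c) = M.det • c := by
    rw [Matrix.mulVec_mulVec, Matrix.adjugate_mul, Matrix.smul_mulVec, Matrix.one_mulVec]
  have h2 := congrFun h1 0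
  rw [hMc] at h2
  have hLHS : (M.adjugate *ᵥ fun i : Fin (n + 1) => if (i : ℕ) = n then A (n + 1) else 0) 0
      = M.adjugate 0 (Fin.last n) * A (n + 1) := by
    simp only [Matrix.mulVec, dotProduct]
    rw [Finset.sum_eq_single (Fin.last n)]
    · rw [if_pos (Fin.val_last n)]
    · intro b _ hb
      rw [if_neg, mul_zero]
      intro hbv
      exact hb (Fin.ext (by simpa using hbv))
    · intro h
      exact absurd (Finset.mem_univ _) h
  have hc0 : c 0 = 1 := by simp [hc]
  rw [hLHS] at h2
  simp only [Pi.smul_apply, hc0, smul_eq_mul, mul_one] at h2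
  have h3 : M.adjugate 0 (Fin.last n) = 1 := by
    rw [Matrix.adjugate_apply]
    set N : Matrix (Fin (n + 1)) (Fin (n + 1)) (Polynomial ℝ) :=
      M.updateRow (Fin.last n) (Pi.single 0 1) with hN
    rw [Matrix.det_succ_row N (Fin.last n)]
    rw [Finset.sum_eq_single (0 : Fin (n + 1))]
    · have hN0 : N (Fin.last n) 0 = 1 := by
        rw [hN, Matrix.updateRow_self, Pi.single_eq_same]
      have hentry : ∀ i j : Fin n, (i : ℕ) < (j : ℕ) →
          N.submatrix (Fin.last n).succAbove (0 : Fin (n + 1)).succAbove i j = 0 := by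
        intro i j hv
        simp only [Matrix.submatrix_apply, Fin.succAbove_last, Fin.succAbove_zero]
        rw [hN, Matrix.updateRow_ne (Fin.ne_of_lt (Fin.castSucc_lt_last i)), hM]
        simp only [Matrix.of_apply, Fin.coe_castSucc, Fin.val_succ]
        rw [if_neg (Nat.succ_ne_zero _), if_neg (by omega), if_neg (by omega)]
      have hdiag : ∀ i : Fin n,
          N.submatrix (Fin.last n).succAbove (0 : Fin (n + 1)).succAbove i i = -1 := by
        intro i
        simp only [Matrix.submatrix_apply, Fin.succAbove_last, Fin.succAbove_zero]
        rw [hN, Matrix.updateRow_ne (Fin.ne_of_lt (Fin.castSucc_lt_last i)), hM]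
        simp only [Matrix.of_apply, Fin.coe_castSucc, Fin.val_succ]
        simp
      have hlow : (N.submatrix (Fin.last n).succAbove
          (0 : Fin (n + 1)).succAbove).BlockTriangular OrderDual.toDual := by
        intro i j hij
        exact hentry i j hij
      have hdet : (N.submatrix (Fin.last n).succAbove (0 : Fin (n + 1)).succAbove).det
          = (-1 : Polynomial ℝ) ^ n := by
        rw [Matrix.det_of_lowerTriangular _ hlow]
        rw [Finset.prod_congr rfl fun i _ => hdiag i]
        simp
      rw [hN0, hdet]
      simp only [Fin.val_last, Fin.val_zero, Nat.add_zero, mul_one]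
      rw [← mul_pow]
      norm_num
    · intro b _ hb
      rw [hN, Matrix.updateRow_self, Pi.single_eq_of_ne hb, mul_zero, zero_mul]
    · intro h
      exact absurd (Finset.mem_univ _) h
  rw [h3, one_mul] at h2
  exact h2
end

section
/- Let D_G be the derivation on polynomials in variables a, b determined by D_G(a) = ab and D_G(b) = ab (the Leibniz rule extension). Then for all n ≥ 0, D_G^n(a) evaluated at a = 1, b = x equals the Eulerian polynomial A_n(x); equivalently D_G^n(a) = a^{n+1} A_n(b/a) as a homogeneous polynomial identity. -/
/-!
Since `D a = D b = ab`, the derivation is `D = ab (∂_a + ∂_b)`, so `Dⁿ(a)` is a binary form of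
degree `n + 1`. Setting `a = 1`, `b = x` turns `∂_b` into `d/dx`, and Euler's identity
`a ∂_a + b ∂_b = n + 1` on forms of degree `n + 1` eliminates `∂_a`; what remains is exactly the
recurrence `A_{n+1} = (n + 1) x A_n + x (1 - x) A_n'` of the Eulerian polynomials.
-/

open Polynomial

namespace MvPolynomial

variable {R σ : Type*} [CommRing R]

theorem derivative_aeval [Fintype σ] (f : σ → R[X]) (q : MvPolynomial σ R) :
    derivative (aeval f q) = ∑ i, aeval f (pderiv i q) * derivative (f i) := by
  classical
  induction q using MvPolynomial.induction_on with
  | C c => simp [Polynomial.algebraMap_eq]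
  | add p q hp hq => simp [hp, hq, Finset.sum_add_distrib, add_mul]
  | mul_X p j hp =>
    simp only [map_mul, aeval_X, derivative_mul, hp, pderiv_mul, map_add, pderiv_X, add_mul,
      Finset.sum_add_distrib, Finset.sum_mul, Pi.single_apply, apply_ite (aeval f), map_zero,
      mul_ite, ite_mul, mul_one, mul_zero, zero_mul, Finset.sum_ite_eq, Finset.mem_univ, if_true,
      mul_right_comm _ (f j)]

noncomputable def dehomogenize (R : Type*) [CommRing R] : MvPolynomial (Fin 2) R →ₐ[R] R[X] :=
  aeval ![1, Polynomial.X]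

@[simp]
theorem dehomogenize_X_zero : dehomogenize R (X 0) = 1 := by
  simp [dehomogenize]

@[simp]
theorem dehomogenize_X_one : dehomogenize R (X 1) = Polynomial.X := by
  simp [dehomogenize]

theorem eval_dehomogenize (x : R) (q : MvPolynomial (Fin 2) R) :
    (dehomogenize R q).eval x = eval ![1, x] q := by
  have h : (fun i => Polynomial.aeval x ((![1, Polynomial.X] : Fin 2 → R[X]) i)) = ![1, x] := by
    funext i
    fin_cases i <;> simp
  rw [← Polynomial.coe_aeval_eq_eval, dehomogenize, comp_aeval_apply, h]
  rfl

theorem derivative_dehomogenize (q : MvPolynomial (Fin 2) R) :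
    derivative (dehomogenize R q) = dehomogenize R (pderiv 1 q) := by
  simp [dehomogenize, derivative_aeval, Fin.sum_univ_two]

theorem dehomogenize_pderiv_zero {q : MvPolynomial (Fin 2) R} {m : ℕ} (hq : q.IsHomogeneous m) :
    dehomogenize R (pderiv 0 q) =
      (m : R[X]) * dehomogenize R q - Polynomial.X * derivative (dehomogenize R q) := by
  have euler := congrArg (dehomogenize R) hq.sum_X_mul_pderiv
  simp only [Fin.sum_univ_two, map_add, map_mul, nsmul_eq_mul, map_natCast, dehomogenize_X_zero,
    dehomogenize_X_one, one_mul] at euler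
  rw [derivative_dehomogenize]
  linear_combination euler

variable {D : Derivation R (MvPolynomial (Fin 2) R) (MvPolynomial (Fin 2) R)}

theorem apply_eq_X_mul_X_mul_pderiv_add (ha : D (X 0) = X 0 * X 1) (hb : D (X 1) = X 0 * X 1)
    (q : MvPolynomial (Fin 2) R) : D q = X 0 * X 1 * (pderiv 0 q + pderiv 1 q) := by
  have hD : D = (X 0 * X 1 : MvPolynomial (Fin 2) R) • (pderiv 0 + pderiv 1) := by
    apply MvPolynomial.derivation_ext
    intro i
    fin_cases i <;> simp [ha, hb, pderiv_X]
  rw [hD, Derivation.smul_apply, Derivation.add_apply, smul_eq_mul]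

theorem isHomogeneous_X_mul_X_mul_pderiv_add {q : MvPolynomial (Fin 2) R} {m : ℕ}
    (hq : q.IsHomogeneous (m + 1)) :
    (X 0 * X 1 * (pderiv 0 q + pderiv 1 q)).IsHomogeneous (m + 2) := by
  have h := ((isHomogeneous_X R 0).mul (isHomogeneous_X R 1)).mul
    ((hq.pderiv (i := 0)).add (hq.pderiv (i := 1)))
  convert h using 1
  omega

theorem dehomogenize_X_mul_X_mul_pderiv_add {q : MvPolynomial (Fin 2) R} {m : ℕ}
    (hq : q.IsHomogeneous m) :
    dehomogenize R (X 0 * X 1 * (pderiv 0 q + pderiv 1 q)) =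
      (m : R[X]) * Polynomial.X * dehomogenize R q +
        Polynomial.X * (1 - Polynomial.X) * derivative (dehomogenize R q) := by
  rw [map_mul, map_mul, map_add, dehomogenize_X_zero, dehomogenize_X_one,
    dehomogenize_pderiv_zero hq, derivative_dehomogenize]
  ring

theorem isHomogeneous_iterate_X_zero (ha : D (X 0) = X 0 * X 1) (hb : D (X 1) = X 0 * X 1)
    (n : ℕ) : ((⇑D)^[n] (X 0)).IsHomogeneous (n + 1) := by
  induction n with
  | zero => exact isHomogeneous_X R 0
  | succ n ih =>
    rw [Function.iterate_succ_apply', apply_eq_X_mul_X_mul_pderiv_add ha hb]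
    exact isHomogeneous_X_mul_X_mul_pderiv_add ih

end MvPolynomial

/-- Dumont's grammatical description of the Eulerian polynomials: if `D` is the
derivation on `ℝ[a,b]` with `D a = ab` and `D b = ab`, then `Dⁿ(a)` evaluated at
`a = 1`, `b = x` equals the Eulerian polynomial `A_n(x)`. -/
theorem grammar_eulerian
    (D : Derivation ℝ (MvPolynomial (Fin 2) ℝ) (MvPolynomial (Fin 2) ℝ))
    (ha : D (MvPolynomial.X 0) = MvPolynomial.X 0 * MvPolynomial.X 1)
    (hb : D (MvPolynomial.X 1) = MvPolynomial.X 0 * MvPolynomial.X 1)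
    (A : ℕ → Polynomial ℝ) (h0 : A 0 = 1)
    (hrec : ∀ n : ℕ, A (n + 1) =
      ((n : Polynomial ℝ) + 1) * X * A n + X * (1 - X) * derivative (A n))
    (n : ℕ) (x : ℝ) :
    MvPolynomial.eval (fun i : Fin 2 => if i = 0 then (1 : ℝ) else x)
        ((⇑D)^[n] (MvPolynomial.X 0)) = (A n).eval x := by
  open MvPolynomial in
  have hdehom : ∀ m, dehomogenize ℝ ((⇑D)^[m] (X 0)) = A m := by
    intro m
    induction m with
    | zero => simp [h0]
    | succ m ih =>
      rw [Function.iterate_succ_apply', apply_eq_X_mul_X_mul_pderiv_add ha hb,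
        dehomogenize_X_mul_X_mul_pderiv_add (isHomogeneous_iterate_X_zero ha hb m), ih, hrec]
      push_cast
      ring
  have hpoint : (fun i : Fin 2 => if i = 0 then (1 : ℝ) else x) = ![1, x] := by
    funext i
    fin_cases i <;> rfl
  rw [hpoint, ← MvPolynomial.eval_dehomogenize, hdehom]
end

section
/- Let D be any derivation on a commutative ring and let v be an invertible element, u any element, w = u·v^{-1}. Then the vector (u, D(u), ..., D^n(u))^T equals L · (w, D(w), ..., D^n(w))^T, where L is the lower triangular matrix with entries L_{ij} = C(i-1, j-1) D^{i-j}(v) for j ≤ i. Consequently D^n(u/v) = (-1)^n w_n / v^{n+1}, where w_n is the determinant of the (n+1)×(n+1) lower Hessenberg matrix with first column (u, D(u), ..., D^n(u)), second column (v, D(v), ..., D^n(v)), and (i,j) entry C(i-1, j-2) D^{i-j+1}(v) for 3 ≤ j ≤ i+1. -/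
/-!
Writing `u = v w`, Leibniz's rule says that `(Dⁱ u)ᵢ = L (Dʲ w)ⱼ` for the lower triangular matrix
`L i j = C(i, j) Dⁱ⁻ʲ v`, whose determinant is `vⁿ⁺¹`. Shifting the columns of `L` cyclically to
the right, by a permutation of sign `(-1)ⁿ`, puts the last column `(0, …, 0, v)` first and the
others in the Hessenberg positions; replacing that first column by `L (Dʲ w)ⱼ = (Dⁱ u)ᵢ` multiplies
the determinant by the coefficient `Dⁿ w` of the column it replaced (Cramer's rule).
-/

open Finset Matrix

theorem Matrix.det_updateCol_mulVec {n R : Type*} [Fintype n] [DecidableEq n] [CommRing R]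
    (A : Matrix n n R) (j : n) (c : n → R) :
    (A.updateCol j (A *ᵥ c)).det = c j * A.det := by
  convert A.det_updateCol_sum j c using 3
  · ext k
    simp only [mulVec, dotProduct, smul_eq_mul, mul_comm]
  · rw [smul_eq_mul]

namespace Derivation

section CommSemiring

variable {R A : Type*} [CommSemiring R] [CommSemiring A] [Algebra R A] (D : Derivation R A A)

theorem iterate_mul (a b : A) (n : ℕ) :
    (⇑D)^[n] (a * b) =
      ∑ k ∈ range (n + 1), (n.choose k : A) * (⇑D)^[n - k] a * (⇑D)^[k] b := by
  induction n with
  | zero => simp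
  | succ n ih =>
    simp only [mul_assoc]
    rw [sum_choose_succ_mul (fun i j => (⇑D)^[j] a * (⇑D)^[i] b), Function.iterate_succ_apply',
      ih, map_sum, ← sum_add_distrib]
    refine sum_congr rfl fun k hk => ?_
    have hkn : n + 1 - k = n - k + 1 := by have := mem_range.1 hk; omega
    rw [hkn, Function.iterate_succ_apply', Function.iterate_succ_apply']
    simp only [leibniz, map_natCast, smul_eq_mul]
    ring

end CommSemiring

variable {R A : Type*} [CommSemiring R] [CommRing A] [Algebra R A] (D : Derivation R A A)

/-- The truncated `i - j` is harmless above the diagonal, where `i.choose j = 0`. -/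
def leibnizMatrix (v : A) (m : ℕ) : Matrix (Fin m) (Fin m) A :=
  of fun i j => ((i : ℕ).choose j : A) * (⇑D)^[i - j] v

theorem det_leibnizMatrix (v : A) (m : ℕ) : (D.leibnizMatrix v m).det = v ^ m := by
  rw [det_of_isLowerTriangular _ fun i j (hij : i < j) => by
    simp [leibnizMatrix, Nat.choose_eq_zero_of_lt (Fin.lt_def.1 hij)]]
  simp [leibnizMatrix]

theorem leibnizMatrix_mulVec_iterate (v w : A) (m : ℕ) :
    D.leibnizMatrix v m *ᵥ (fun j => (⇑D)^[j] w) = fun i : Fin m => (⇑D)^[i] (v * w) := by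
  ext i
  rw [D.iterate_mul, sum_subset (range_subset_range.2 i.isLt), ← Fin.sum_univ_eq_sum_range
    (fun j => ((i : ℕ).choose j : A) * (⇑D)^[i - j] v * (⇑D)^[j] w)]
  · rfl
  · intro j _ hj
    rw [Nat.choose_eq_zero_of_lt (by simpa using hj), Nat.cast_zero, zero_mul, zero_mul]

/-- With 0-based indices, `C(i, j - 1) Dⁱ⁺¹⁻ʲ v` is the entry `C(i-1, j-2) D^{i-j+1}(v)` of the
informal statement; the guard `j ≤ i + 1` keeps the subtraction `i + 1 - j` honest. -/
def quotientHessenberg (u v : A) (n : ℕ) : Matrix (Fin (n + 1)) (Fin (n + 1)) A :=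
  of fun i j =>
    if (j : ℕ) = 0 then (⇑D)^[i] u
    else if (j : ℕ) ≤ i + 1 then ((i : ℕ).choose (j - 1) : A) * (⇑D)^[i + 1 - j] v
    else 0

theorem quotientHessenberg_eq_updateCol (u v : A) (n : ℕ) :
    D.quotientHessenberg u v n =
      ((D.leibnizMatrix v (n + 1)).submatrix id (finRotate (n + 1)).symm).updateCol 0
        (fun i => (⇑D)^[i] u) := by
  ext i j
  induction j using Fin.cases with
  | zero => simp [quotientHessenberg]
  | succ j =>
    have hrot : (finRotate (n + 1)).symm j.succ = j.castSucc := by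
      rw [Equiv.symm_apply_eq, finRotate_apply, Fin.coeSucc_eq_succ]
    simp only [quotientHessenberg, leibnizMatrix, of_apply, updateCol_ne (Fin.succ_ne_zero j),
      submatrix_apply, id_eq, hrot, Fin.val_succ, Fin.val_castSucc, Nat.add_sub_cancel,
      Nat.add_one_ne_zero, if_false, Nat.add_sub_add_right]
    split_ifs with hji
    · rfl
    · rw [Nat.choose_eq_zero_of_lt (by omega), Nat.cast_zero, zero_mul]

theorem det_quotientHessenberg_mul (v w : A) (n : ℕ) :
    (D.quotientHessenberg (v * w) v n).det = (-1) ^ n * v ^ (n + 1) * (⇑D)^[n] w := by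
  set σ := (finRotate (n + 1)).symm
  have hcol : (fun i : Fin (n + 1) => (⇑D)^[i] (v * w)) =
      (D.leibnizMatrix v (n + 1)).submatrix id σ *ᵥ (fun j => (⇑D)^[σ j] w) := by
    rw [submatrix_mulVec_equiv, ← D.leibnizMatrix_mulVec_iterate]
    simp [Function.comp_def]
  have hσ0 : σ 0 = Fin.last n := by
    rw [Equiv.symm_apply_eq, finRotate_last]
  rw [quotientHessenberg_eq_updateCol, hcol, det_updateCol_mulVec, det_permute', det_leibnizMatrix,
    Equiv.Perm.sign_symm, sign_finRotate, hσ0, Fin.val_last]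
  push_cast
  ring

end Derivation

/-- Grammatical (derivation) version of the determinantal quotient formula.  Let `D` be a
derivation on a commutative ring `R`, `v` a unit, `u` any element, `w = u·v⁻¹`.  Then
`Dⁱ(u) = Σ_{j≤i} C(i,j) D^{i-j}(v) Dʲ(w)` (the lower triangular matrix-vector identity) and
consequently `Dⁿ(w) = (-1)ⁿ·wₙ·v^{-(n+1)}`, where `wₙ` is the determinant of the
`(n+1)×(n+1)` lower Hessenberg matrix with first column `(u, D u, …, Dⁿ u)`, second column
`(v, D v, …, Dⁿ v)`, and `(i,j)` entry `C(i-1, j-2)·D^{i-j+1}(v)` for `3 ≤ j ≤ i+1` (1-based). -/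
theorem derivation_quotient_det {R : Type*} [CommRing R] (D : Derivation ℤ R R)
    (u : R) (v : Rˣ) (w : R) (hw : w = u * ↑v⁻¹) (n : ℕ) :
    (∀ i : ℕ, i ≤ n → (⇑D)^[i] u =
        ∑ j ∈ Finset.range (i + 1),
          (i.choose j : R) * (⇑D)^[i - j] (v : R) * (⇑D)^[j] w) ∧
    (⇑D)^[n] w = (-1 : R) ^ n *
        (Matrix.of fun i j : Fin (n + 1) =>
          if (j : ℕ) = 0 then (⇑D)^[(i : ℕ)] u
          else if (j : ℕ) ≤ (i : ℕ) + 1 then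
            ((i : ℕ).choose ((j : ℕ) - 1) : R) * (⇑D)^[(i : ℕ) + 1 - (j : ℕ)] (v : R)
          else 0).det * ((↑(v⁻¹) : R) ^ (n + 1)) := by
  have hu : u = v * w := by rw [hw, mul_left_comm, Units.mul_inv, mul_one]
  subst hu
  refine ⟨fun i _ => D.iterate_mul _ _ i, ?_⟩
  change _ = _ * (D.quotientHessenberg (v * w) v n).det * _
  have hsign : (-1 : R) ^ n * (-1) ^ n = 1 := by rw [← mul_pow, neg_one_mul, neg_neg, one_pow]
  have hunit : (v : R) ^ (n + 1) * ↑v⁻¹ ^ (n + 1) = 1 := by rw [← mul_pow, Units.mul_inv, one_pow]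
  rw [D.det_quotientHessenberg_mul]
  linear_combination (-(v : R) ^ (n + 1) * ↑v⁻¹ ^ (n + 1) * (⇑D)^[n] w) * hsign
    - (⇑D)^[n] w * hunit
end

section
/- Define polynomials S_n(x) by S_0(x) = 1 and S_{n+1}(x) = x(nx+1) S_n(x) + x(1-x²) S_n'(x) (the up-down run polynomials). Then for n ≥ 1, S_{n+1}(x) = (1+x) · Σ_{r=1}^{n} C(n, r-1) (-1)^{n-r} (1-x²)^{⌊(n-r)/2⌋} S_r(x). -/
/-!
Write `L_a f = X(aX+1)f + X(1-X²)f'`, so that `S_{n+1} = L_n S_n`, and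
`w_k = (-1)^k (1-X²)^⌊k/2⌋`. Three identities drive an induction on `n`:
`L_{a+1}((1+X)g) = (1+X)(L_a g + Xg)`;
`L_a(w_k f) = w_k L_{a-2⌊k/2⌋} f`, because `X(1-X²)` times the logarithmic derivative of
`(1-X²)^q` is `-2qX²`; and `w_{k+1} = ((k mod 2)X² - 1) w_k`.
Applying `L_{n+1}` termwise to `S_{n+1} = (1+X) Σ_j C(n,j) w_{n-1-j} S_{j+1}`, these turn each
term into terms of the same shape, and Pascal's rule collects them into the sum for `n + 1`.
-/

open Polynomial Finset

namespace UpDownRun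

variable {R : Type*} [CommRing R]

noncomputable def runOp (a : R[X]) : R[X] →ₗ[R] R[X] :=
  LinearMap.mulLeft R (X * (a * X + 1)) + LinearMap.mulLeft R (X * (1 - X ^ 2)) ∘ₗ derivative

lemma runOp_apply (a f : R[X]) :
    runOp a f = X * (a * X + 1) * f + X * (1 - X ^ 2) * derivative f := rfl

lemma runOp_add_param (a b f : R[X]) : runOp (a + b) f = runOp a f + b * X ^ 2 * f := by
  simp only [runOp_apply]; ring

lemma runOp_one_add_X_mul (a g : R[X]) :
    runOp (a + 1) ((1 + X) * g) = (1 + X) * (runOp a g + X * g) := by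
  simp only [runOp_apply, derivative_mul, derivative_add, derivative_one, derivative_X]; ring

noncomputable def runWeight (k : ℕ) : R[X] := (-1) ^ k * (1 - X ^ 2) ^ (k / 2)

lemma runWeight_zero : runWeight 0 = (1 : R[X]) := by simp [runWeight]

lemma runWeight_succ (k : ℕ) :
    runWeight (k + 1) = (((k % 2 : ℕ) : R[X]) * X ^ 2 - 1) * runWeight k := by
  obtain ⟨j, rfl | rfl⟩ := Nat.even_or_odd' k
  · simp only [runWeight, show (2 * j + 1) / 2 = j by omega, show 2 * j % 2 = 0 by omega,
      show 2 * j / 2 = j by omega]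
    push_cast; ring
  · simp only [runWeight, show (2 * j + 1 + 1) / 2 = j + 1 by omega,
      show (2 * j + 1) % 2 = 1 by omega, show (2 * j + 1) / 2 = j by omega]
    push_cast; ring

lemma X_mul_one_sub_X_sq_mul_derivative_pow (q : ℕ) :
    X * (1 - X ^ 2) * derivative ((1 - X ^ 2 : R[X]) ^ q) =
      -(2 * (q : R[X])) * X ^ 2 * (1 - X ^ 2) ^ q := by
  cases q with
  | zero => simp
  | succ q =>
    simp only [derivative_pow, derivative_sub, derivative_one, derivative_X, map_natCast,
      Nat.add_sub_cancel]
    push_cast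
    ring

lemma runOp_runWeight_mul (a f : R[X]) (k : ℕ) :
    runOp a (runWeight k * f) = runWeight k * runOp (a - 2 * ((k / 2 : ℕ) : R[X])) f := by
  have hd := X_mul_one_sub_X_sq_mul_derivative_pow (R := R) (k / 2)
  have hsign : derivative ((-1 : R[X]) ^ k) = 0 := by
    rw [← C_1, ← C_neg, ← C_pow, derivative_C]
  simp only [runOp_apply, runWeight, derivative_mul, hsign]
  linear_combination ((-1) ^ k * f) * hd

noncomputable def runSum (g : ℕ → R[X]) (n : ℕ) : R[X] :=
  ∑ j ∈ range n, (n.choose j : R[X]) * runWeight (n - (j + 1)) * g j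

lemma runSum_succ (g : ℕ → R[X]) (n : ℕ) :
    runSum g (n + 1) = runSum (fun j => g (j + 1)) n +
      ∑ j ∈ range (n + 1), (n.choose j : R[X]) * runWeight (n - j) * g j := by
  rw [runSum, sum_range_succ', runSum, sum_range_succ']
  simp only [Nat.choose_succ_succ, Nat.cast_add, add_mul, sum_add_distrib, Nat.choose_zero_right,
    Nat.add_sub_add_right, Nat.sub_zero, zero_add, Nat.add_sub_cancel]
  ring

lemma sum_Icc_eq_runSum (g : ℕ → R[X]) (n : ℕ) :
    ∑ r ∈ Icc 1 n,
        (n.choose (r - 1) : R[X]) * (-1) ^ (n - r) * (1 - X ^ 2) ^ ((n - r) / 2) * g r =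
      runSum (fun j => g (j + 1)) n := by
  rw [runSum, ← Finset.Ico_add_one_right_eq_Icc, sum_Ico_eq_sum_range]
  refine sum_congr rfl fun j _ => ?_
  rw [add_comm 1 j, Nat.add_sub_cancel, runWeight, mul_assoc _ ((-1) ^ _)]

section Recurrence

variable {S : ℕ → R[X]}

lemma runOp_runWeight_mul_term (hrec : ∀ n : ℕ, S (n + 1) = runOp (n : R[X]) (S n))
    (j k : ℕ) :
    runOp ((j + 1 + k : ℕ) : R[X]) (runWeight k * S (j + 1)) + X * (runWeight k * S (j + 1)) =
      runWeight k * S (j + 2) + runWeight (k + 1) * S (j + 1) +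
        (1 + X) * (runWeight k * S (j + 1)) := by
  have hparam : ((j + 1 + k : ℕ) : R[X]) - 2 * ((k / 2 : ℕ) : R[X]) =
      ((j + 1 : ℕ) : R[X]) + ((k % 2 : ℕ) : R[X]) := by
    have hk : (k : R[X]) = 2 * ((k / 2 : ℕ) : R[X]) + ((k % 2 : ℕ) : R[X]) := by
      rw [← Nat.cast_ofNat, ← Nat.cast_mul, ← Nat.cast_add, Nat.div_add_mod]
    push_cast
    linear_combination hk
  rw [runOp_runWeight_mul, hparam, runOp_add_param, ← hrec, runWeight_succ]
  ring

lemma runOp_runSum (hrec : ∀ n : ℕ, S (n + 1) = runOp (n : R[X]) (S n)) (n : ℕ) :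
    runOp (n : R[X]) (runSum (fun j => S (j + 1)) n) + X * runSum (fun j => S (j + 1)) n =
      runSum (fun j => S (j + 2)) n +
        ∑ j ∈ range n, (n.choose j : R[X]) * runWeight (n - j) * S (j + 1) +
          (1 + X) * runSum (fun j => S (j + 1)) n := by
  simp only [runSum, map_sum, mul_sum, ← sum_add_distrib]
  refine sum_congr rfl fun j hj => ?_
  obtain ⟨k, rfl⟩ := Nat.exists_eq_add_of_lt (mem_range.mp hj)
  have h := runOp_runWeight_mul_term hrec j k
  rw [show j + k + 1 - (j + 1) = k by omega, show j + k + 1 - j = k + 1 by omega,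
    mul_assoc, ← nsmul_eq_mul, map_nsmul, nsmul_eq_mul, show j + k + 1 = j + 1 + k by omega]
  linear_combination ((j + 1 + k).choose j : R[X]) * h

lemma runSum_step (hrec : ∀ n : ℕ, S (n + 1) = runOp (n : R[X]) (S n))
    (n : ℕ) (ih : S (n + 1) = (1 + X) * runSum (fun j => S (j + 1)) n) :
    S (n + 2) = (1 + X) * runSum (fun j => S (j + 1)) (n + 1) := by
  rw [hrec, Nat.cast_add_one, ih, runOp_one_add_X_mul, runOp_runSum hrec, ← ih, runSum_succ,
    sum_range_succ, Nat.choose_self, Nat.sub_self, runWeight_zero]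
  push_cast
  ring

lemma succ_eq_one_add_X_mul_runSum (hrec : ∀ n : ℕ, S (n + 1) = runOp (n : R[X]) (S n))
    (h0 : S 0 = 1) (n : ℕ) (hn : 1 ≤ n) :
    S (n + 1) = (1 + X) * runSum (fun j => S (j + 1)) n := by
  induction n, hn using Nat.le_induction with
  | base =>
    have hS1 : S 1 = X := by rw [hrec, h0, runOp_apply]; simp
    rw [hrec, hS1, runOp_apply, runSum, sum_range_one, hS1]
    simp only [Nat.cast_one, one_mul, derivative_X, mul_one, Nat.choose_succ_self_right,
      zero_add, tsub_self, runWeight_zero]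
    ring
  | succ n _ ih => exact runSum_step hrec n ih

end Recurrence

end UpDownRun

/-- The up-down run polynomials, defined by `S 0 = 1` and
`S_{n+1} = x(nx+1)S_n + x(1-x²)S_n'`, satisfy for `n ≥ 1`:
`S_{n+1}(x) = (1+x)·Σ_{r=1}^{n} C(n, r-1)(-1)^{n-r}(1-x²)^{⌊(n-r)/2⌋} S_r(x)`. -/
theorem updown_run_recurrence (S : ℕ → Polynomial ℝ) (h0 : S 0 = 1)
    (hrec : ∀ n : ℕ, S (n + 1) =
      X * ((n : Polynomial ℝ) * X + 1) * S n + X * (1 - X ^ 2) * derivative (S n))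
    (n : ℕ) (hn : 1 ≤ n) :
    S (n + 1) = (1 + X) * ∑ r ∈ Finset.Icc 1 n,
      (n.choose (r - 1) : Polynomial ℝ) * (-1 : Polynomial ℝ) ^ (n - r) *
        (1 - X ^ 2) ^ ((n - r) / 2) * S r := by
  rw [UpDownRun.sum_Icc_eq_runSum]
  exact UpDownRun.succ_eq_one_add_X_mul_runSum hrec h0 n hn
end

section
/- Define R_n(x) by R_0(x) = R_1(x) = 1 and R_{n+2}(x) = x(nx+2) R_{n+1}(x) + x(1-x²) R_{n+1}'(x) (the alternating run polynomials). Then for n ≥ 1, R_{n+1}(x) = (-1)^{n-1}(x-1)(1-x²)^{⌊(n-1)/2⌋} + (1+x) Σ_{r=2}^{n+1} C(n, r-2) (-1)^{n-r+1} (1-x²)^{⌊(n-r+1)/2⌋} R_{r-1}(x). -/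
/-!
Write `D_j p = X(jX+2) p + X(1-X²) p'`, so that `R_{j+2} = D_j R_{j+1}`, and
`d_k = (-1)^k (1-X²)^⌊k/2⌋`. The operator obeys the twisted Leibniz rule
`D_{i+j}(pq) = (D_i p) q + p (D_j q) - 2Xpq`, and `D_k d_k = d_{k+1} + (1+2X) d_k`; together
`D_{k+m}(d_k R_{m+1}) = d_{k+1} R_{m+1} + d_k R_{m+2} + d_k R_{m+1}`. So applying `D_{n+1}` to the
binomial convolution `Σ_m C(n+1,m) d_{n-m} R_{m+1}` raises one index in each term, and Pascal's rule
reassembles the convolution of order `n+2`; the claim (with `m = r - 2`) follows by induction on `n`.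
-/

open Polynomial Finset

theorem Finset.sum_range_succ_choose_nsmul {M : Type*} [AddCommMonoid M] (f : ℕ → ℕ → M)
    (n : ℕ) :
    ∑ m ∈ range (n + 2), (n + 2).choose m • f m (n + 1 - m) =
      ∑ m ∈ range (n + 1), (n + 1).choose m • (f m (n + 1 - m) + f (m + 1) (n - m)) +
        f (n + 1) 0 := by
  set g : ℕ → M := fun m ↦ (n + 1).choose m • f m (n + 1 - m)
  have shift : ∑ m ∈ range (n + 1), (n + 1).choose (m + 1) • f (m + 1) (n - m) + f 0 (n + 1) =
      ∑ m ∈ range (n + 1), g m + f (n + 1) 0 := by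
    have h := (sum_range_succ' g (n + 1)).symm.trans (sum_range_succ g (n + 1))
    simpa [g] using h
  rw [sum_range_succ']
  simp only [Nat.choose_succ_succ' (n + 1), add_smul, sum_add_distrib, smul_add,
    Nat.choose_zero_right, one_smul, Nat.add_sub_add_right, Nat.sub_zero]
  rw [add_assoc, shift]
  abel

namespace AlternatingRuns

variable {K : Type*} [CommRing K]

noncomputable def signedFactor (k : ℕ) : K[X] := (-1) ^ k * (1 - X ^ 2) ^ (k / 2)

@[simp]
theorem signedFactor_zero : (signedFactor 0 : K[X]) = 1 := by simp [signedFactor]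

@[simp]
theorem signedFactor_one : (signedFactor 1 : K[X]) = -1 := by simp [signedFactor]

theorem signedFactor_add_two (k : ℕ) :
    (signedFactor (k + 2) : K[X]) = (1 - X ^ 2) * signedFactor k := by
  rw [signedFactor, signedFactor, show (k + 2) / 2 = k / 2 + 1 by omega]
  ring

noncomputable def runOp (j : ℕ) : K[X] →ₗ[K] K[X] :=
  LinearMap.mulLeft K (X * ((j : K[X]) * X + 2)) +
    LinearMap.mulLeft K (X * (1 - X ^ 2)) ∘ₗ derivative

theorem runOp_apply (j : ℕ) (p : K[X]) :
    runOp j p = X * ((j : K[X]) * X + 2) * p + X * (1 - X ^ 2) * derivative p := rfl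

theorem runOp_add_mul (i j : ℕ) (p q : K[X]) :
    runOp (i + j) (p * q) = runOp i p * q + p * runOp j q - 2 * X * p * q := by
  simp only [runOp_apply, derivative_mul, Nat.cast_add]
  ring

theorem runOp_signedFactor (k : ℕ) :
    runOp k (signedFactor k : K[X]) = signedFactor (k + 1) + (1 + 2 * X) * signedFactor k := by
  induction k using Nat.twoStepInduction with
  | zero =>
    simp only [runOp_apply, zero_add, signedFactor_zero, signedFactor_one, Nat.cast_zero,
      derivative_one]
    ring
  | one =>
    simp only [runOp_apply, signedFactor_add_two 0, signedFactor_zero, signedFactor_one,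
      Nat.cast_one, derivative_neg, derivative_one]
    ring
  | more k ih _ =>
    have h : runOp 2 (1 - X ^ 2 : K[X]) = 2 * X * (1 - X ^ 2) := by
      simp only [runOp_apply, derivative_sub, derivative_one, derivative_X_pow, Nat.cast_ofNat,
        map_ofNat]
      ring
    rw [signedFactor_add_two, add_comm k 2, runOp_add_mul, h, ih, add_comm 2 k,
      add_right_comm, signedFactor_add_two]
    ring

theorem runOp_signedFactor_mul (k m : ℕ) (p : K[X]) :
    runOp (k + m) (signedFactor k * p) =
      signedFactor (k + 1) * p + signedFactor k * runOp m p + signedFactor k * p := by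
  rw [runOp_add_mul, runOp_signedFactor]
  ring

theorem runOp_one_add_X_mul (j : ℕ) (p : K[X]) :
    runOp (j + 1) ((1 + X) * p) = (1 + X) * (runOp j p + X * p) := by
  rw [add_comm j 1, runOp_add_mul]
  simp only [runOp_apply, Nat.cast_one, derivative_add, derivative_one, derivative_X]
  ring

theorem runOp_X_sub_one_mul_signedFactor (k : ℕ) :
    runOp (k + 1) ((X - 1) * signedFactor k : K[X]) =
      (X - 1) * (signedFactor (k + 1) + (1 + X) * signedFactor k) := by
  rw [show runOp (k + 1) = runOp (1 + k) by rw [add_comm], runOp_add_mul, runOp_signedFactor]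
  simp only [runOp_apply, Nat.cast_one, derivative_sub, derivative_one, derivative_X]
  ring

noncomputable def runConvolution (R : ℕ → K[X]) (n : ℕ) : K[X] :=
  ∑ m ∈ range (n + 1), (n + 1).choose m • (signedFactor (n - m) * R (m + 1))

theorem runConvolution_succ (R : ℕ → K[X]) (n : ℕ) :
    runConvolution R (n + 1) =
      ∑ m ∈ range (n + 1), (n + 1).choose m •
        (signedFactor (n + 1 - m) * R (m + 1) + signedFactor (n - m) * R (m + 2)) + R (n + 2) := by
  have h := sum_range_succ_choose_nsmul (fun m k ↦ (signedFactor k : K[X]) * R (m + 1)) n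
  rw [signedFactor_zero, one_mul] at h
  exact h

theorem runOp_runConvolution {R : ℕ → K[X]} (hR : ∀ n, R (n + 2) = runOp n (R (n + 1)))
    (n : ℕ) :
    runOp n (runConvolution R n) =
      runConvolution R (n + 1) - R (n + 2) + runConvolution R n := by
  have term : ∀ m ∈ range (n + 1), runOp n (signedFactor (n - m) * R (m + 1)) =
      signedFactor (n + 1 - m) * R (m + 1) + signedFactor (n - m) * R (m + 2) +
        signedFactor (n - m) * R (m + 1) := fun m hm ↦ by
    obtain ⟨k, rfl⟩ := Nat.exists_eq_add_of_le' (mem_range_succ_iff.1 hm)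
    rw [Nat.add_sub_cancel, Nat.add_right_comm, Nat.add_sub_cancel, runOp_signedFactor_mul, hR]
  rw [runConvolution_succ, add_sub_cancel_right, runConvolution, map_sum]
  simp only [map_nsmul]
  rw [sum_congr rfl fun m hm ↦ congrArg _ (term m hm)]
  simp only [smul_add, sum_add_distrib]

theorem eq_X_sub_one_mul_signedFactor_add {R : ℕ → K[X]} (h1 : R 1 = 1)
    (hR : ∀ n, R (n + 2) = runOp n (R (n + 1))) (n : ℕ) :
    R (n + 2) = (X - 1) * signedFactor n + (1 + X) * runConvolution R n := by
  induction n with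
  | zero =>
    simp only [zero_add, hR 0, h1, runOp_apply, runConvolution, range_one, sum_singleton,
      Nat.choose_zero_right, one_smul, Nat.sub_zero, signedFactor_zero, derivative_one,
      Nat.cast_zero]
    ring
  | succ n ih =>
    rw [hR (n + 1), ih, map_add, runOp_X_sub_one_mul_signedFactor, runOp_one_add_X_mul,
      runOp_runConvolution hR]
    linear_combination (-(1 + X)) * ih

theorem runConvolution_eq_sum_Icc (R : ℕ → K[X]) (n : ℕ) :
    runConvolution R n = ∑ r ∈ Icc 2 (n + 1 + 1), ((n + 1).choose (r - 2) : K[X]) *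
      (-1) ^ (n + 1 + 1 - r) * (1 - X ^ 2) ^ ((n + 1 + 1 - r) / 2) * R (r - 1) := by
  rw [runConvolution, ← Ico_add_one_right_eq_Icc, sum_Ico_eq_sum_range,
    show n + 1 + 1 + 1 - 2 = n + 1 by omega]
  refine sum_congr rfl fun m hm ↦ ?_
  rw [show n + 1 + 1 - (2 + m) = n - m by omega, show 2 + m - 2 = m by omega,
    show 2 + m - 1 = m + 1 by omega, nsmul_eq_mul, signedFactor]
  ring

end AlternatingRuns

theorem alternating_run_recurrence_general (R : ℕ → Polynomial ℝ) (h1 : R 1 = 1)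
    (hrec : ∀ n : ℕ, R (n + 2) =
      X * ((n : Polynomial ℝ) * X + 2) * R (n + 1) + X * (1 - X ^ 2) * derivative (R (n + 1)))
    (n : ℕ) (hn : 1 ≤ n) :
    R (n + 1) = (-1 : Polynomial ℝ) ^ (n - 1) * (X - 1) * (1 - X ^ 2) ^ ((n - 1) / 2) +
      (1 + X) * ∑ r ∈ Finset.Icc 2 (n + 1),
        (n.choose (r - 2) : Polynomial ℝ) * (-1 : Polynomial ℝ) ^ (n + 1 - r) *
          (1 - X ^ 2) ^ ((n + 1 - r) / 2) * R (r - 1) := by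
  obtain ⟨k, rfl⟩ := Nat.exists_eq_add_of_le' hn
  rw [Nat.add_sub_cancel, ← AlternatingRuns.runConvolution_eq_sum_Icc,
    AlternatingRuns.eq_X_sub_one_mul_signedFactor_add h1 hrec k, AlternatingRuns.signedFactor]
  ring

/-- The alternating run polynomials, defined by `R 0 = R 1 = 1` and
`R_{n+2} = x(nx+2)R_{n+1} + x(1-x²)R_{n+1}'`, satisfy for `n ≥ 1`:
`R_{n+1}(x) = (-1)^{n-1}(x-1)(1-x²)^{⌊(n-1)/2⌋}
  + (1+x)·Σ_{r=2}^{n+1} C(n, r-2)(-1)^{n-r+1}(1-x²)^{⌊(n-r+1)/2⌋} R_{r-1}(x)`. -/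
theorem alternating_run_recurrence (R : ℕ → Polynomial ℝ) (h0 : R 0 = 1) (h1 : R 1 = 1)
    (hrec : ∀ n : ℕ, R (n + 2) =
      X * ((n : Polynomial ℝ) * X + 2) * R (n + 1) + X * (1 - X ^ 2) * derivative (R (n + 1)))
    (n : ℕ) (hn : 1 ≤ n) :
    R (n + 1) = (-1 : Polynomial ℝ) ^ (n - 1) * (X - 1) * (1 - X ^ 2) ^ ((n - 1) / 2) +
      (1 + X) * ∑ r ∈ Finset.Icc 2 (n + 1),
        (n.choose (r - 2) : Polynomial ℝ) * (-1 : Polynomial ℝ) ^ (n + 1 - r) *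
          (1 - X ^ 2) ^ ((n + 1 - r) / 2) * R (r - 1) :=
  alternating_run_recurrence_general R h1 hrec n hn
end

section
/- With S_n(x) the up-down run polynomials (S_0 = 1, S_{n+1}(x) = x(nx+1)S_n(x) + x(1-x²)S_n'(x)), for every n ≥ 1 the polynomial S_n(x) is divisible by (1+x)^{⌊n/2⌋} in ℝ[x]. -/
open Polynomial

theorem updown_aux (S : ℕ → Polynomial ℝ) (h0 : S 0 = 1)
    (hrec : ∀ n : ℕ, S (n + 1) =
      X * ((n : Polynomial ℝ) * X + 1) * S n + X * (1 - X ^ 2) * derivative (S n)) :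
    ∀ n : ℕ, (1 + X) ^ (n / 2) ∣ S n := by
  intro n
  induction n with
  | zero => simp [h0]
  | succ n ih =>
    obtain ⟨T, hT⟩ := ih
    set k := n / 2 with hk
    have hpow : (1 + X : Polynomial ℝ) * derivative ((1+X)^k)
        = (k : Polynomial ℝ) * (1+X)^k := by
      cases k with
      | zero => simp
      | succ m =>
        rw [derivative_pow]
        simp only [derivative_add, derivative_one, derivative_X, zero_add, mul_one,
          Nat.succ_sub_one, Nat.cast_succ]
        rw [pow_succ]
        simp only [map_add, map_one, Polynomial.C_eq_natCast]
        ring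
    set Q : Polynomial ℝ := X * ((n : Polynomial ℝ) * X + 1) * T
        + X * (1 - X) * ((k : Polynomial ℝ) * T + (1 + X) * derivative T) with hQ
    have hS1 : S (n+1) = (1+X)^k * Q := by
      rw [hrec, hT, derivative_mul, hQ]
      linear_combination (X * (1 - X) * T) * hpow
    rcases Nat.even_or_odd n with he | ho
    · obtain ⟨m, hm⟩ := he
      have h2 : (n+1)/2 = k := by omega
      rw [h2]
      exact ⟨Q, hS1⟩
    · obtain ⟨m, hm⟩ := ho
      have hkm : k = m := by omega
      have hroot : IsRoot Q (-1) := by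
        have hcast : (n : ℝ) = 2 * (k : ℝ) + 1 := by
          rw [hkm]; push_cast [hm]; ring
        simp only [IsRoot, hQ, eval_add, eval_mul, eval_sub, eval_one, eval_X,
          eval_natCast]
        rw [hcast]
        ring
      have hdvd : (1 + X : Polynomial ℝ) ∣ Q := by
        have : (1 + X : Polynomial ℝ) = X - Polynomial.C (-1 : ℝ) := by
          simp; ring
        rw [this, dvd_iff_isRoot]
        exact hroot
      obtain ⟨R, hR⟩ := hdvd
      have h2 : (n+1)/2 = k + 1 := by omega
      rw [h2]
      exact ⟨R, by rw [hS1, hR, pow_succ]; ring⟩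

/-- For `n ≥ 1`, the up-down run polynomial `S n` is divisible by `(1+x)^{⌊n/2⌋}` in `ℝ[x]`. -/
theorem updown_run_divisibility (S : ℕ → Polynomial ℝ) (h0 : S 0 = 1)
    (hrec : ∀ n : ℕ, S (n + 1) =
      X * ((n : Polynomial ℝ) * X + 1) * S n + X * (1 - X ^ 2) * derivative (S n))
    (n : ℕ) (hn : 1 ≤ n) :
    (1 + X) ^ (n / 2) ∣ S n :=
  updown_aux S h0 hrec n
end

section
/- With R_n(x) the alternating run polynomials (R_0 = R_1 = 1, R_{n+2}(x) = x(nx+2)R_{n+1}(x) + x(1-x²)R_{n+1}'(x)), for every n ≥ 2 the polynomial R_n(x) is divisible by (1+x)^{⌊n/2⌋ - 1} in ℝ[x]. -/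
open Polynomial

lemma deriv_aux_run (k : ℕ) (S : Polynomial ℝ) :
    (1 + X) * derivative ((1 + X) ^ k * S) =
      (1 + X) ^ k * (C (k : ℝ) * S + (1 + X) * derivative S) := by
  rw [derivative_mul, derivative_pow]
  have hd : derivative (1 + X : Polynomial ℝ) = 1 := by simp
  rw [hd]
  cases k with
  | zero => simp
  | succ k =>
    have : (k + 1 - 1 : ℕ) = k := rfl
    rw [this]
    push_cast
    ring

lemma run_main (R : ℕ → Polynomial ℝ)
    (hrec : ∀ n : ℕ, R (n + 2) =
      X * ((n : Polynomial ℝ) * X + 2) * R (n + 1) + X * (1 - X ^ 2) * derivative (R (n + 1))) :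
    ∀ m : ℕ, 1 ≤ m → (1 + X) ^ ((m + 1) / 2 - 1) ∣ R (m + 1) := by
  intro m hm
  induction m, hm using Nat.le_induction with
  | base => simp
  | succ m hm ih =>
    obtain ⟨S, hS⟩ := ih
    set k := (m + 1) / 2 - 1 with hk
    have key : R (m + 2) = (1 + X) ^ k *
        (X * ((m : Polynomial ℝ) * X + 2) * S
          + X * (1 - X) * (C (k : ℝ) * S + (1 + X) * derivative S)) := by
      rw [hrec m, hS]
      have h2 := deriv_aux_run k S
      have h3 : X * (1 - X ^ 2) * derivative ((1 + X) ^ k * S)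
          = X * (1 - X) * ((1 + X) * derivative ((1 + X) ^ k * S)) := by ring
      rw [h3, h2]; ring
    rcases Nat.even_or_odd m with he | ho
    · -- m even, m ≥ 1 so m = 2k + 2
      have hm2 : m = 2 * k + 2 := by
        obtain ⟨t, ht⟩ := he
        omega
      have hexp : (m + 1 + 1) / 2 - 1 = k + 1 := by omega
      rw [hexp, key]
      set T : Polynomial ℝ := X * ((m : Polynomial ℝ) * X + 2) * S
          + X * (1 - X) * (C (k : ℝ) * S + (1 + X) * derivative S) with hT
      have hroot : IsRoot T (-1) := by
        have hmc : ((m : ℝ)) = 2 * (k : ℝ) + 2 := by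
          rw [hm2]; push_cast; ring
        simp only [hT, IsRoot, eval_add, eval_mul, eval_sub, eval_pow, eval_X, eval_C,
          eval_one, eval_ofNat, eval_natCast]
        rw [hmc]; ring
      obtain ⟨U, hU⟩ := dvd_iff_isRoot.mpr hroot
      have hx : (X - C (-1 : ℝ)) = 1 + X := by
        simp [sub_neg_eq_add]; ring
      rw [hU, hx]
      exact ⟨U, by ring⟩
    · -- m odd: exponent unchanged
      have hexp : (m + 1 + 1) / 2 - 1 = k := by
        obtain ⟨t, ht⟩ := ho
        omega
      rw [hexp, key]
      exact Dvd.intro _ rfl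

/-- For `n ≥ 2`, the alternating run polynomial `R n` is divisible by
`(1+x)^{⌊n/2⌋-1}` in `ℝ[x]`. -/
theorem alternating_run_divisibility (R : ℕ → Polynomial ℝ) (h0 : R 0 = 1) (h1 : R 1 = 1)
    (hrec : ∀ n : ℕ, R (n + 2) =
      X * ((n : Polynomial ℝ) * X + 2) * R (n + 1) + X * (1 - X ^ 2) * derivative (R (n + 1)))
    (n : ℕ) (hn : 2 ≤ n) :
    (1 + X) ^ (n / 2 - 1) ∣ R n := by
  obtain ⟨m, rfl⟩ : ∃ m, n = m + 1 := ⟨n - 1, by omega⟩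
  exact run_main R hrec m (by omega)
end

section
/- For all n ≥ 2, the up-down run polynomial and the alternating run polynomial satisfy S_n(x) = (1+x) R_n(x) / 2. -/
open Polynomial

/-- The word `π(0) π(1) … π(n-1)` of a permutation `π` of `Fin n`, as a function `ℕ → ℕ`
(junk value `0` outside the range). -/
def permWord (n : ℕ) (π : Equiv.Perm (Fin n)) (i : ℕ) : ℕ :=
  if h : i < n then (π ⟨i, h⟩ : ℕ) else 0

/-- The extended word `0 (π(0)+1) (π(1)+1) … (π(n-1)+1)`, i.e. the permutation word
prefixed by a `0` (values are shifted by `1` so they exceed the prefixed `0`). -/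
def permWordExt (n : ℕ) (π : Equiv.Perm (Fin n)) (i : ℕ) : ℕ :=
  if h : 1 ≤ i ∧ i ≤ n then (π ⟨i - 1, by omega⟩ : ℕ) + 1 else 0

/-- `run π`: the number of alternating runs (maximal monotone consecutive segments) of `π`,
computed as `1` plus the number of interior turning points of the word of `π`. -/
def runCount (n : ℕ) (π : Equiv.Perm (Fin n)) : ℕ :=
  1 + ((Finset.Icc 1 (n - 2)).filter (fun i =>
    (permWord n π (i - 1) < permWord n π i) ↔ (permWord n π (i + 1) < permWord n π i))).card

/-- `as π`: the length of the longest alternating subsequence of `π`, which equals the number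
of alternating runs of the word `0 π(1) … π(n)` (the up-down runs of `π`). -/
def asCount (n : ℕ) (π : Equiv.Perm (Fin n)) : ℕ :=
  1 + ((Finset.Icc 1 (n - 1)).filter (fun i =>
    (permWordExt n π (i - 1) < permWordExt n π i) ↔
      (permWordExt n π (i + 1) < permWordExt n π i))).card

namespace Bona

variable {n : ℕ}

def gp (π : Equiv.Perm (Fin n)) : Equiv.Perm (Fin n) := π.trans Fin.revPerm

lemma gp_invol : Function.Involutive (gp (n := n)) := by
  intro π; ext x; simp [gp, Fin.rev_rev]

lemma permWord_lt (π : Equiv.Perm (Fin n)) {i : ℕ} (h : i < n) : permWord n π i < n := by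
  simp only [permWord, dif_pos h]
  exact (π ⟨i, h⟩).isLt

lemma permWord_ne (π : Equiv.Perm (Fin n)) {i j : ℕ} (hi : i < n) (hj : j < n) (hij : i ≠ j) :
    permWord n π i ≠ permWord n π j := by
  simp only [permWord, dif_pos hi, dif_pos hj]
  intro h
  exact hij (by simpa using π.injective (Fin.val_injective h))

lemma permWord_gp (π : Equiv.Perm (Fin n)) {i : ℕ} (h : i < n) :
    permWord n (gp π) i = n - 1 - permWord n π i := by
  simp only [permWord, dif_pos h, gp, Equiv.trans_apply, Fin.revPerm_apply, Fin.val_rev]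
  omega

lemma permWordExt_eq (π : Equiv.Perm (Fin n)) {i : ℕ} (h1 : 1 ≤ i) (h2 : i ≤ n) :
    permWordExt n π i = permWord n π (i - 1) + 1 := by
  unfold permWordExt permWord
  rw [dif_pos ⟨h1, h2⟩, dif_pos (by omega : i - 1 < n)]

lemma permWordExt_zero (π : Equiv.Perm (Fin n)) : permWordExt n π 0 = 0 := by
  simp [permWordExt]

lemma runCount_gp (π : Equiv.Perm (Fin n)) : runCount n (gp π) = runCount n π := by
  unfold runCount
  congr 1
  apply congrArg Finset.card
  apply Finset.filter_congr
  intro i hi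
  simp only [Finset.mem_Icc] at hi
  have h1 : i - 1 < n := by omega
  have h2 : i < n := by omega
  have h3 : i + 1 < n := by omega
  rw [permWord_gp π h1, permWord_gp π h2, permWord_gp π h3]
  have b1 := permWord_lt π h1
  have b2 := permWord_lt π h2
  have b3 := permWord_lt π h3
  have nab := permWord_ne π h1 h2 (by omega)
  have ncb := permWord_ne π h3 h2 (by omega)
  constructor <;> intro h <;> omega

lemma asCount_eq (hn : 2 ≤ n) (π : Equiv.Perm (Fin n)) :
    asCount n π = runCount n π + (if permWord n π 0 < permWord n π 1 then 0 else 1) := by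
  unfold asCount runCount
  have hsplit : Finset.Icc 1 (n - 1) = insert 1 (Finset.Icc 2 (n - 1)) := by
    ext x
    simp only [Finset.mem_Icc, Finset.mem_insert]
    omega
  rw [hsplit, Finset.filter_insert]
  have hQ1 : ((permWordExt n π 0 < permWordExt n π 1) ↔ (permWordExt n π 2 < permWordExt n π 1))
      ↔ ¬ (permWord n π 0 < permWord n π 1) := by
    rw [permWordExt_zero, permWordExt_eq π le_rfl (by omega), permWordExt_eq π (by omega) hn]
    have := permWord_ne π (show (0:ℕ) < n by omega) (show 1 < n by omega) (by omega)
    simp only [show (1:ℕ) - 1 = 0 from rfl, show (2:ℕ) - 1 = 1 from rfl]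
    omega
  have hcard : ((Finset.Icc 2 (n - 1)).filter (fun i =>
      (permWordExt n π (i - 1) < permWordExt n π i) ↔
        (permWordExt n π (i + 1) < permWordExt n π i))).card
      = ((Finset.Icc 1 (n - 2)).filter (fun i =>
      (permWord n π (i - 1) < permWord n π i) ↔ (permWord n π (i + 1) < permWord n π i))).card := by
    apply Finset.card_bij (fun a _ => a - 1)
    · intro a ha
      simp only [Finset.mem_filter, Finset.mem_Icc] at ha ⊢
      obtain ⟨⟨ha1, ha2⟩, hq⟩ := ha
      refine ⟨by omega, ?_⟩
      rw [permWordExt_eq π (by omega) (by omega), permWordExt_eq π (by omega) (by omega),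
        permWordExt_eq π (by omega) (by omega)] at hq
      have e1 : a - 1 - 1 = a - 1 - 1 := rfl
      -- align indices
      have : a - 1 - 1 = a - 2 := by omega
      simp only [show a - 1 - 1 = a - 2 from by omega, show a + 1 - 1 = a from by omega] at hq
      simpa [show a - 1 - 1 = a - 2 from by omega, show a - 1 + 1 = a from by omega] using hq
    · intro a ha b hb hab
      simp only [Finset.mem_filter, Finset.mem_Icc] at ha hb
      omega
    · intro b hb
      simp only [Finset.mem_filter, Finset.mem_Icc] at hb
      refine ⟨b + 1, ?_, by omega⟩
      simp only [Finset.mem_filter, Finset.mem_Icc]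
      obtain ⟨⟨hb1, hb2⟩, hq⟩ := hb
      refine ⟨⟨by omega, by omega⟩, ?_⟩
      rw [permWordExt_eq π (by omega) (by omega), permWordExt_eq π (by omega) (by omega),
        permWordExt_eq π (by omega) (by omega)]
      simpa [show b + 1 - 1 - 1 = b - 1 from by omega, show b + 1 - 1 = b from by omega,
        show b + 1 + 1 - 1 = b + 1 from by omega] using hq
  by_cases hA : permWord n π 0 < permWord n π 1
  · rw [if_neg (by rw [hQ1]; exact not_not_intro hA), if_pos hA, hcard]
    omega
  · rw [if_pos (hQ1.mpr hA), if_neg hA,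
      Finset.card_insert_of_notMem (by simp only [Finset.mem_filter, Finset.mem_Icc]; omega),
      hcard]
    omega

lemma A_gp (hn : 2 ≤ n) (π : Equiv.Perm (Fin n)) :
    (permWord n (gp π) 0 < permWord n (gp π) 1) ↔ ¬ (permWord n π 0 < permWord n π 1) := by
  have h0 : (0:ℕ) < n := by omega
  have h1 : (1:ℕ) < n := by omega
  rw [permWord_gp π h0, permWord_gp π h1]
  have b0 := permWord_lt π h0
  have b1 := permWord_lt π h1
  have := permWord_ne π h0 h1 (by omega)
  omega

end Bona

/-- B\'ona's identity: for `n ≥ 2`, `S_n(x) = (1+x)·R_n(x)/2`, where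
`R_n(x) = Σ_{π ∈ S_n} x^{run(π)}` and `S_n(x) = Σ_{π ∈ S_n} x^{as(π)}`. -/
theorem updown_eq_half_alternating (n : ℕ) (hn : 2 ≤ n) :
    (2 : Polynomial ℝ) * ∑ π : Equiv.Perm (Fin n), X ^ asCount n π =
      (1 + X) * ∑ π : Equiv.Perm (Fin n), X ^ runCount n π := by
  have key : ∀ π : Equiv.Perm (Fin n),
      (X : Polynomial ℝ) ^ asCount n π + X ^ asCount n (Bona.gp π)
        = (1 + X) * X ^ runCount n π := by
    intro π
    rw [Bona.asCount_eq hn π, Bona.asCount_eq hn (Bona.gp π), Bona.runCount_gp π]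
    by_cases hA : permWord n π 0 < permWord n π 1
    · rw [if_pos hA, if_neg (by rw [Bona.A_gp hn π]; exact not_not_intro hA)]
      ring
    · rw [if_neg hA, if_pos ((Bona.A_gp hn π).mpr hA)]
      ring
  have hbij : Function.Bijective (Bona.gp (n := n)) := Bona.gp_invol.bijective
  have hsum : ∑ π : Equiv.Perm (Fin n), (X : Polynomial ℝ) ^ asCount n (Bona.gp π)
      = ∑ π : Equiv.Perm (Fin n), X ^ asCount n π :=
    Fintype.sum_bijective _ hbij _ _ (fun π => rfl)
  calc (2 : Polynomial ℝ) * ∑ π : Equiv.Perm (Fin n), X ^ asCount n π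
      = (∑ π : Equiv.Perm (Fin n), X ^ asCount n π)
        + ∑ π : Equiv.Perm (Fin n), X ^ asCount n (Bona.gp π) := by rw [hsum]; ring
    _ = ∑ π : Equiv.Perm (Fin n), (X ^ asCount n π + X ^ asCount n (Bona.gp π)) := by
        rw [Finset.sum_add_distrib]
    _ = ∑ π : Equiv.Perm (Fin n), (1 + X) * X ^ runCount n π := by
        exact Finset.sum_congr rfl (fun π _ => key π)
    _ = (1 + X) * ∑ π : Equiv.Perm (Fin n), X ^ runCount n π := by rw [Finset.mul_sum]
end

section
/- Define T(n,k) for n ≥ 1 by T(1,1) = 1, T(1,k) = 0 for k ≠ 1, and T(n,k) = (2k-1)T(n-1,k) + 3T(n-1,k-1) + (2n-2k+2)T(n-1,k-2) for n ≥ 2 (with T(n,k) = 0 for k ≤ 0). Let D_G be the derivation on ℝ[a,b,c] with D_G(a) = a(b+c), D_G(b) = 2bc, D_G(c) = 2b². Then for all n ≥ 1, D_G^n(a) = a(b+c) · Σ_{k=1}^{n} T(n,k) b^{k-1} c^{n-k}. -/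
/-!
Write `u = b + c`. Since `D a = a u` and `D u = 2 b u`, we get `D (a u G) = a u ((3 b + c) G + D G)`,
so it suffices that `G_n = ∑ T(n,k) b^(k-1) c^(n-k)` satisfies `G_(n+1) = (3 b + c) G_n + D G_n`.
Expanding `D` on monomials and comparing the coefficients of `b^(k-1) c^(n+1-k)`, this is exactly
the recurrence for `T`, the boundary terms vanishing because `T n 0 = 0` and `T n (n+1) = 0`.
-/

open Finset Finset.Nat

theorem eq_zero_of_row_lt {T : ℕ → ℕ → ℕ} (hT1 : ∀ k : ℕ, k ≠ 1 → T 1 k = 0)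
    (hTrec : ∀ n k : ℕ, 2 ≤ n → 1 ≤ k →
      T n k = (2 * k - 1) * T (n - 1) k + 3 * T (n - 1) (k - 1) +
        (2 * n + 2 - 2 * k) * T (n - 1) (k - 2)) :
    ∀ n k : ℕ, 1 ≤ n → n < k → T n k = 0
  | 0, _, hn, _ => absurd hn (by omega)
  | 1, k, _, hk => hT1 k (by omega)
  | n + 2, k, _, hk => by
    rw [hTrec (n + 2) k (by omega) (by omega), show n + 2 - 1 = n + 1 from rfl,
      eq_zero_of_row_lt hT1 hTrec (n + 1) k (by omega) (by omega),
      eq_zero_of_row_lt hT1 hTrec (n + 1) (k - 1) (by omega) (by omega),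
      show 2 * (n + 2) + 2 - 2 * k = 0 by omega]
    ring

section RunPoly

variable {A : Type*} [CommSemiring A]

/-- `runPoly T b c m` is `∑ k ∈ Icc 1 n, T n k * b ^ (k - 1) * c ^ (n - k)` for `n = m + 1`,
indexed by the exponent pair `(k - 1, n - k)` so that no truncated subtraction occurs. -/
def runPoly (T : ℕ → ℕ → ℕ) (b c : A) (m : ℕ) : A :=
  ∑ p ∈ antidiagonal m, (T (m + 1) (p.1 + 1) : A) * (b ^ p.1 * c ^ p.2)

theorem sum_Icc_eq_runPoly (T : ℕ → ℕ → ℕ) (b c : A) (m : ℕ) :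
    ∑ k ∈ Icc 1 (m + 1), (T (m + 1) k : A) * b ^ (k - 1) * c ^ (m + 1 - k) =
      runPoly T b c m := by
  rw [runPoly, sum_antidiagonal_eq_sum_range_succ_mk, ← Ico_add_one_right_eq_Icc,
    sum_Ico_eq_sum_range]
  refine sum_congr (by simp) fun k _ => ?_
  rw [show 1 + k = k + 1 by omega, Nat.add_sub_cancel, mul_assoc]
  congr 3
  omega

theorem runPoly_succ_eq_sum {T : ℕ → ℕ → ℕ}
    (hTrec : ∀ n k : ℕ, 2 ≤ n → 1 ≤ k →
      T n k = (2 * k - 1) * T (n - 1) k + 3 * T (n - 1) (k - 1) +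
        (2 * n + 2 - 2 * k) * T (n - 1) (k - 2)) (b c : A) (m : ℕ) :
    runPoly T b c (m + 1) =
      ∑ p ∈ antidiagonal (m + 1), 3 * (T (m + 1) p.1 : A) * (b ^ p.1 * c ^ p.2) +
      ∑ p ∈ antidiagonal (m + 1),
        (2 * (p.1 : A) + 1) * T (m + 1) (p.1 + 1) * (b ^ p.1 * c ^ p.2) +
      ∑ p ∈ antidiagonal (m + 1),
        (2 * (p.2 : A) + 2) * T (m + 1) (p.1 - 1) * (b ^ p.1 * c ^ p.2) := by
  rw [runPoly, ← sum_add_distrib, ← sum_add_distrib]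
  refine sum_congr rfl fun p hp => ?_
  rw [HasAntidiagonal.mem_antidiagonal] at hp
  rw [hTrec (m + 1 + 1) (p.1 + 1) (by omega) (by omega), show m + 1 + 1 - 1 = m + 1 from rfl,
    show 2 * (p.1 + 1) - 1 = 2 * p.1 + 1 by omega,
    show 2 * (m + 1 + 1) + 2 - 2 * (p.1 + 1) = 2 * p.2 + 2 by omega, Nat.add_sub_cancel,
    show p.1 + 1 - 2 = p.1 - 1 by omega]
  push_cast
  ring

theorem sum_antidiagonal_mul_pow_pred (t : ℕ → ℕ) (ht : t 0 = 0) (b c : A) (m : ℕ) :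
    ∑ p ∈ antidiagonal m, 2 * (p.2 : A) * t (p.1 + 1) * (b ^ (p.1 + 2) * c ^ (p.2 - 1)) =
      ∑ p ∈ antidiagonal (m + 1), (2 * (p.2 : A) + 2) * t (p.1 - 1) * (b ^ p.1 * c ^ p.2) := by
  rw [sum_antidiagonal_succ]
  cases m with
  | zero => simp [ht]
  | succ m =>
    rw [sum_antidiagonal_succ', sum_antidiagonal_succ]
    simp only [ht, Nat.cast_zero, mul_zero, zero_mul, zero_add, Nat.add_sub_cancel]
    refine sum_congr rfl fun p _ => ?_
    push_cast
    ring

end RunPoly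

namespace Derivation

variable {R A : Type*} [CommSemiring R] [CommSemiring A] [Algebra R A]
  (D : Derivation R A A) {a b c : A}

theorem map_natCast_mul (k : ℕ) (x : A) : D (k * x) = k * D x := by
  rw [← nsmul_eq_mul, map_nsmul, nsmul_eq_mul]

theorem map_pow_mul_pow (hb : D b = 2 * (b * c)) (hc : D c = 2 * b ^ 2) (i j : ℕ) :
    D (b ^ i * c ^ j) = 2 * i * (b ^ i * c ^ (j + 1)) + 2 * j * (b ^ (i + 2) * c ^ (j - 1)) := by
  rw [D.leibniz, D.leibniz_pow, D.leibniz_pow, hb, hc]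
  cases i <;> simp only [smul_eq_mul, nsmul_eq_mul] <;> push_cast <;> ring

theorem map_mul_add_mul (ha : D a = a * (b + c)) (hb : D b = 2 * (b * c))
    (hc : D c = 2 * b ^ 2) (x : A) :
    D (a * (b + c) * x) = a * (b + c) * ((3 * b + c) * x + D x) := by
  rw [D.leibniz, D.leibniz, map_add, ha, hb, hc]
  simp only [smul_eq_mul]
  ring

theorem runPoly_succ (hb : D b = 2 * (b * c)) (hc : D c = 2 * b ^ 2)
    {T : ℕ → ℕ → ℕ} (hT0 : ∀ n, T n 0 = 0)
    (hTrec : ∀ n k : ℕ, 2 ≤ n → 1 ≤ k →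
      T n k = (2 * k - 1) * T (n - 1) k + 3 * T (n - 1) (k - 1) +
        (2 * n + 2 - 2 * k) * T (n - 1) (k - 2)) {m : ℕ} (htop : T (m + 1) (m + 2) = 0) :
    (3 * b + c) * runPoly T b c m + D (runPoly T b c m) = runPoly T b c (m + 1) := by
  have expand : (3 * b + c) * runPoly T b c m + D (runPoly T b c m) =
      ∑ p ∈ antidiagonal m, 3 * (T (m + 1) (p.1 + 1) : A) * (b ^ (p.1 + 1) * c ^ p.2) +
      ∑ p ∈ antidiagonal m,
        (2 * (p.1 : A) + 1) * T (m + 1) (p.1 + 1) * (b ^ p.1 * c ^ (p.2 + 1)) +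
      ∑ p ∈ antidiagonal m,
        2 * (p.2 : A) * T (m + 1) (p.1 + 1) * (b ^ (p.1 + 2) * c ^ (p.2 - 1)) := by
    simp only [runPoly, mul_sum, map_sum, D.map_natCast_mul, D.map_pow_mul_pow hb hc,
      ← sum_add_distrib]
    refine sum_congr rfl fun p _ => ?_
    ring
  rw [expand, runPoly_succ_eq_sum hTrec, sum_antidiagonal_succ (n := m),
    sum_antidiagonal_succ' (n := m)
      (f := fun p => (2 * (p.1 : A) + 1) * T (m + 1) (p.1 + 1) * _),
    ← sum_antidiagonal_mul_pow_pred _ (hT0 (m + 1))]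
  simp only [hT0, htop, Nat.cast_zero, mul_zero, zero_mul, zero_add]

end Derivation

/-- Grammatical description of the type `B` alternating run numbers `T(n,k)` over up signed
permutations: if `D` is the derivation on `ℝ[a,b,c]` with `D a = a(b+c)`, `D b = 2bc`,
`D c = 2b²`, then `Dⁿ(a) = a(b+c)·Σ_{k=1}^{n} T(n,k) b^{k-1} c^{n-k}` for all `n ≥ 1`. -/
theorem grammar_typeB_run
    (D : Derivation ℝ (MvPolynomial (Fin 3) ℝ) (MvPolynomial (Fin 3) ℝ))
    (ha : D (MvPolynomial.X 0) = MvPolynomial.X 0 * (MvPolynomial.X 1 + MvPolynomial.X 2))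
    (hb : D (MvPolynomial.X 1) = 2 * (MvPolynomial.X 1 * MvPolynomial.X 2))
    (hc : D (MvPolynomial.X 2) = 2 * MvPolynomial.X 1 ^ 2)
    (T : ℕ → ℕ → ℕ)
    (hT11 : T 1 1 = 1) (hT1 : ∀ k : ℕ, k ≠ 1 → T 1 k = 0) (hT0 : ∀ n : ℕ, T n 0 = 0)
    (hTrec : ∀ n k : ℕ, 2 ≤ n → 1 ≤ k →
      T n k = (2 * k - 1) * T (n - 1) k + 3 * T (n - 1) (k - 1) +
        (2 * n + 2 - 2 * k) * T (n - 1) (k - 2))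
    (n : ℕ) (hn : 1 ≤ n) :
    (⇑D)^[n] (MvPolynomial.X 0) =
      MvPolynomial.X 0 * (MvPolynomial.X 1 + MvPolynomial.X 2) *
        ∑ k ∈ Finset.Icc 1 n,
          (T n k : MvPolynomial (Fin 3) ℝ) * MvPolynomial.X 1 ^ (k - 1) *
            MvPolynomial.X 2 ^ (n - k) := by
  obtain ⟨m, rfl⟩ : ∃ m, n = m + 1 := ⟨n - 1, by omega⟩
  rw [sum_Icc_eq_runPoly]
  induction m with
  | zero => simp [runPoly, ha, hT11]
  | succ m ih =>
    rw [Function.iterate_succ_apply', ih (by omega), D.map_mul_add_mul ha hb hc,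
      D.runPoly_succ hb hc hT0 hTrec (eq_zero_of_row_lt hT1 hTrec _ _ (by omega) (by omega))]
end

section
/- Define T_n(x) = Σ_{k=1}^n T(n,k) x^k where T(n,k) satisfies T(1,1)=1, T(n,k) = (2k-1)T(n-1,k) + 3T(n-1,k-1) + (2n-2k+2)T(n-1,k-2). Define t_m(x) = (1+x)(1-x²)^{k-1} if m = 2k-1 and t_m(x) = -(1-x²)^k if m = 2k. Then for n ≥ 1: T_n(x) = (x/(1+x))·t_n(x) + Σ_{r=2}^{n} C(n, r-1) t_{n-r+1}(x) T_{r-1}(x), as an identity of rational functions (equivalently, (1+x)T_n(x) = x·t_n(x) + (1+x)Σ_{r=2}^{n} C(n,r-1) t_{n-r+1}(x) T_{r-1}(x)). -/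
open Polynomial Finset

/-!
Let `D n f = 2n x² f + 2x(1 - x²) f'`. It obeys the Leibniz rule
`D (i + j) (f g) = D i f · g + f · D j g`, so by Pascal's rule the binomial convolution
`c n = ∑ C(n, i) a_i b_{n-i}` of solutions of `a_{i+1} = D i a_i + α a_i` and
`b_{j+1} = D j b_j + β b_j` solves `c_{n+1} = D n c_n + (α + β) c_n`.
Both `a_n = (1 + x) T_n`, continued by `a_0 = x`, and `b_n = t_n`, continued by `t_0 = -1`
(the value the formula for even indices gives), are such solutions, with `α = (1 + x)(2x - 1)`
and `β = -(1 + x)`; the second because `(1 - x²)^k` is annihilated by `D (2k)`.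
The identity to be proved says exactly that `c n = 0` for `n ≥ 1`. Since `c 1 = 0` and the
recurrence for `c` is homogeneous, this holds.
-/

noncomputable section

variable {R : Type*} [CommRing R]

def runDeriv (n : ℕ) : R[X] →ₗ[R] R[X] :=
  LinearMap.mulLeft R (2 * n * X ^ 2) + LinearMap.mulLeft R (2 * X * (1 - X ^ 2)) ∘ₗ derivative

@[simp] lemma runDeriv_apply (n : ℕ) (f : R[X]) :
    runDeriv n f = 2 * (n : R[X]) * X ^ 2 * f + 2 * X * (1 - X ^ 2) * derivative f := rfl

lemma runDeriv_add_mul (i j : ℕ) (f g : R[X]) :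
    runDeriv (i + j) (f * g) = runDeriv i f * g + f * runDeriv j g := by
  simp only [runDeriv_apply, derivative_mul]
  push_cast
  ring

lemma runDeriv_two_one_sub_X_sq : runDeriv 2 (1 - X ^ 2 : R[X]) = 0 := by
  simp only [runDeriv_apply, derivative_sub, derivative_one, derivative_X_sq, C_ofNat]
  push_cast
  ring

lemma runDeriv_one_sub_X_sq_pow (k : ℕ) : runDeriv (2 * k) ((1 - X ^ 2 : R[X]) ^ k) = 0 := by
  induction k with
  | zero => simp
  | succ k ih =>
    rw [mul_add, mul_one, pow_succ, runDeriv_add_mul, ih, runDeriv_two_one_sub_X_sq, zero_mul,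
      mul_zero, add_zero]

def binomialConv (a b : ℕ → R[X]) (n : ℕ) : R[X] :=
  ∑ i ∈ range (n + 1), n.choose i • (a i * b (n - i))

theorem binomialConv_succ_eq_runDeriv {a b : ℕ → R[X]} {α β : R[X]}
    (ha : ∀ i, a (i + 1) = runDeriv i (a i) + α * a i)
    (hb : ∀ j, b (j + 1) = runDeriv j (b j) + β * b j) (n : ℕ) :
    binomialConv a b (n + 1) =
      runDeriv n (binomialConv a b n) + (α + β) * binomialConv a b n := by
  rw [binomialConv, sum_choose_succ_nsmul (fun i j => a i * b j), binomialConv, map_sum,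
    mul_sum, ← sum_add_distrib, ← sum_add_distrib]
  refine sum_congr rfl fun i hi => ?_
  obtain ⟨k, rfl⟩ := Nat.exists_eq_add_of_le (Nat.lt_succ_iff.mp (mem_range.mp hi))
  rw [show i + k + 1 - i = k + 1 by omega, Nat.add_sub_cancel_left, map_nsmul, mul_smul_comm,
    ← smul_add, ← smul_add, ha, hb, runDeriv_add_mul]
  ring

theorem binomialConv_eq_zero {a b : ℕ → R[X]} {α β : R[X]}
    (ha : ∀ i, a (i + 1) = runDeriv i (a i) + α * a i)
    (hb : ∀ j, b (j + 1) = runDeriv j (b j) + β * b j) (h1 : binomialConv a b 1 = 0)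
    {n : ℕ} (hn : 1 ≤ n) :
    binomialConv a b n = 0 := by
  induction n, hn using Nat.le_induction with
  | base => exact h1
  | succ n _ ih => rw [binomialConv_succ_eq_runDeriv ha hb, ih, map_zero, mul_zero, add_zero]

theorem binomialConv_succ (a b : ℕ → R[X]) (m : ℕ) :
    binomialConv a b (m + 1) = a 0 * b (m + 1) +
      ∑ i ∈ range m, (m + 1).choose (i + 1) • (a (i + 1) * b (m - i)) + a (m + 1) * b 0 := by
  rw [binomialConv, sum_range_succ, sum_range_succ']
  simp [add_comm (a 0 * b (m + 1))]

def tPoly (m : ℕ) : R[X] :=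
  if Even m then -(1 - X ^ 2) ^ (m / 2) else (1 + X) * (1 - X ^ 2) ^ (m / 2)

@[simp] lemma tPoly_zero : (tPoly 0 : R[X]) = -1 := by
  simp [tPoly]

lemma tPoly_two_mul (k : ℕ) : (tPoly (2 * k) : R[X]) = -(1 - X ^ 2) ^ k := by
  simp [tPoly]

lemma tPoly_two_mul_add_one (k : ℕ) :
    (tPoly (2 * k + 1) : R[X]) = (1 + X) * (1 - X ^ 2) ^ k := by
  simp [tPoly, Nat.mul_add_div]

lemma tPoly_succ_eq_runDeriv (m : ℕ) :
    (tPoly (m + 1) : R[X]) = runDeriv m (tPoly m) + -(1 + X) * tPoly m := by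
  obtain ⟨k, rfl | rfl⟩ := Nat.even_or_odd' m
  · rw [tPoly_two_mul_add_one, tPoly_two_mul, map_neg, runDeriv_one_sub_X_sq_pow]
    ring
  · rw [show 2 * k + 1 + 1 = 2 * (k + 1) by ring, tPoly_two_mul, tPoly_two_mul_add_one,
      mul_comm (1 + X), runDeriv_add_mul (2 * k) 1, runDeriv_one_sub_X_sq_pow]
    simp only [runDeriv_apply, Nat.cast_one, derivative_add, derivative_one, derivative_X]
    ring

lemma eq_tPoly {t : ℕ → R[X]}
    (ht : ∀ k : ℕ, 1 ≤ k →
      t (2 * k - 1) = (1 + X) * (1 - X ^ 2) ^ (k - 1) ∧ t (2 * k) = -(1 - X ^ 2) ^ k)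
    {m : ℕ} (hm : 1 ≤ m) : t m = tPoly m := by
  obtain ⟨k, rfl | rfl⟩ := Nat.even_or_odd' m
  · rw [tPoly_two_mul]
    exact (ht k (by omega)).2
  · have hodd := (ht (k + 1) (by omega)).1
    rwa [show 2 * (k + 1) - 1 = 2 * k + 1 by omega, Nat.add_sub_cancel,
      ← tPoly_two_mul_add_one] at hodd

def extendedRun (T : ℕ → R[X]) : ℕ → R[X] := Function.update (fun n => (1 + X) * T n) 0 X

@[simp] lemma extendedRun_zero (T : ℕ → R[X]) : extendedRun T 0 = X := by
  simp [extendedRun]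

@[simp] lemma extendedRun_succ (T : ℕ → R[X]) (n : ℕ) :
    extendedRun T (n + 1) = (1 + X) * T (n + 1) := by
  simp [extendedRun]

lemma extendedRun_succ_eq_runDeriv {T : ℕ → R[X]} (h1 : T 1 = X)
    (hrec : ∀ n : ℕ, 1 ≤ n → T (n + 1) =
      (2 * (n : R[X]) * X ^ 2 + 3 * X - 1) * T n + 2 * X * (1 - X ^ 2) * derivative (T n))
    (n : ℕ) :
    extendedRun T (n + 1) =
      runDeriv n (extendedRun T n) + (1 + X) * (2 * X - 1) * extendedRun T n := by
  rcases n with _ | n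
  · simp only [zero_add, extendedRun_succ, h1, extendedRun_zero, runDeriv_apply, Nat.cast_zero,
      mul_zero, zero_mul, derivative_X, mul_one]
    ring
  · simp only [extendedRun_succ, runDeriv_apply, hrec (n + 1) (by omega), derivative_mul,
      Nat.cast_add, Nat.cast_one, derivative_add, derivative_one, derivative_X, zero_add, one_mul]
    ring

end

/-- Recurrence for the type `B` alternating run polynomials: with `T 1 = x`,
`T_{n+1} = (2nx²+3x-1)T_n + 2x(1-x²)T_n'`, and
`t_{2k-1} = (1+x)(1-x²)^{k-1}`, `t_{2k} = -(1-x²)^k`, one has for `n ≥ 1`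
`(1+x)·T_n(x) = x·t_n(x) + (1+x)·Σ_{r=2}^{n} C(n, r-1) t_{n-r+1}(x) T_{r-1}(x)`. -/
theorem typeB_run_recurrence (T : ℕ → Polynomial ℝ) (h1 : T 1 = X)
    (hrec : ∀ n : ℕ, 1 ≤ n → T (n + 1) =
      (2 * (n : Polynomial ℝ) * X ^ 2 + 3 * X - 1) * T n + 2 * X * (1 - X ^ 2) * derivative (T n))
    (t : ℕ → Polynomial ℝ)
    (ht : ∀ k : ℕ, 1 ≤ k →
      t (2 * k - 1) = (1 + X) * (1 - X ^ 2) ^ (k - 1) ∧ t (2 * k) = -(1 - X ^ 2) ^ k)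
    (n : ℕ) (hn : 1 ≤ n) :
    (1 + X) * T n = X * t n +
      (1 + X) * ∑ r ∈ Finset.Icc 2 n,
        (n.choose (r - 1) : Polynomial ℝ) * t (n - r + 1) * T (r - 1) := by
  obtain ⟨m, rfl⟩ : ∃ m, n = m + 1 := ⟨n - 1, by omega⟩
  have hconv : binomialConv (extendedRun T) tPoly (m + 1) = 0 :=
    binomialConv_eq_zero (extendedRun_succ_eq_runDeriv h1 hrec) tPoly_succ_eq_runDeriv
      (by simp [binomialConv_succ, tPoly, h1, mul_comm]) hn
  have hsum : (1 + X) * ∑ r ∈ Icc 2 (m + 1),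
        ((m + 1).choose (r - 1) : ℝ[X]) * t (m + 1 - r + 1) * T (r - 1)
      = ∑ i ∈ range m, (m + 1).choose (i + 1) • (extendedRun T (i + 1) * tPoly (m - i)) := by
    rw [← Ico_add_one_right_eq_Icc, sum_Ico_eq_sum_range, mul_sum]
    refine sum_congr (by simp) fun i hi => ?_
    have hi : i < m := by simpa using hi
    rw [show 2 + i - 1 = i + 1 by omega, show m + 1 - (2 + i) + 1 = m - i by omega,
      eq_tPoly ht (by omega : 1 ≤ m - i), extendedRun_succ, nsmul_eq_mul]
    ring
  rw [binomialConv_succ, ← hsum, extendedRun_zero, extendedRun_succ, tPoly_zero] at hconv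
  rw [eq_tPoly ht hn]
  linear_combination -hconv
end

section
/- For every n ≥ 1, (1+x)^{⌊(n-1)/2⌋} divides the type B alternating run polynomial T_n(x) in ℝ[x], and this power is the exact multiplicity of the root -1; i.e., the multiplicity of -1 in T_n(x) is ⌊(n-1)/2⌋. -/
open Polynomial Finset

noncomputable def gc : ℕ → ℕ → ℝ
  | 0, _ => 0
  | 1, 0 => -1
  | 1, 1 => 1
  | 1, (_+2) => 0
  | (n+2), 0 => (2*((n:ℝ)+1) - 4) * gc (n+1) 0
  | (n+2), (k+1) => (2*((n:ℝ)+1) - 4 - 4*((k:ℝ)+1)) * gc (n+1) (k+1)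
      + (4*((k:ℝ)+1) - 2*((n:ℝ)+1) - 2) * gc (n+1) k

lemma gc_rec0 (n : ℕ) (hn : 1 ≤ n) : gc (n+1) 0 = (2*(n:ℝ) - 4) * gc n 0 := by
  obtain ⟨m, rfl⟩ : ∃ m, n = m + 1 := ⟨n-1, by omega⟩
  rw [show m+1+1 = m+2 from rfl, gc]
  push_cast; ring_nf

lemma gc_rec (n k : ℕ) (hn : 1 ≤ n) : gc (n+1) (k+1)
    = (2*(n:ℝ) - 4 - 4*((k:ℝ)+1)) * gc n (k+1) + (4*((k:ℝ)+1) - 2*(n:ℝ) - 2) * gc n k := by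
  obtain ⟨m, rfl⟩ : ∃ m, n = m + 1 := ⟨n-1, by omega⟩
  rw [show m+1+1 = m+2 from rfl, gc]
  push_cast; ring_nf

lemma gc_top : ∀ n k : ℕ, 1 ≤ n → n < k → gc n k = 0 := by
  intro n
  induction n with
  | zero => intro k h; omega
  | succ n ih =>
    intro k h hk
    rcases Nat.lt_or_ge 1 (n+1) with h1 | h1
    · have hn : 1 ≤ n := by omega
      match k, hk with
      | (j+1), hk =>
        rw [gc_rec n j hn, ih j hn (by omega), ih (j+1) hn (by omega)]
        ring
    · have : n = 0 := by omega
      subst this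
      match k, hk with
      | (j+2), _ => simp [gc]


lemma term_id (k j : ℕ) :
    (1+X)*(1-X) * (2*(2*((k:ℝ[X])+(j:ℝ[X]))*X^2+3*X-1) * ((1+X)^k*(1-X)^j)
        + 4*X*(1-(X:ℝ[X])^2) * derivative ((1+X)^k*(1-X)^j))
    = C (2*(j:ℝ)-2*(k:ℝ)-4) * ((1+X)^(k+1)*(1-X)^(j+2))
      + C (2*(k:ℝ)-2*(j:ℝ)+2) * ((1+X)^(k+2)*(1-X)^(j+1)) := by
  have hd : derivative (((1+X)^k*(1-X)^j) : ℝ[X])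
      = (k:ℝ[X]) * (1+X)^(k-1) * (1-X)^j - (j:ℝ[X]) * (1+X)^k * (1-X)^(j-1) := by
    simp [derivative_mul, derivative_pow]
    ring
  rw [hd]
  simp only [map_sub, map_add, map_mul, map_ofNat, C_eq_natCast]
  rcases k with _|k <;> rcases j with _|j <;>
    simp only [Nat.cast_zero, Nat.cast_succ, pow_zero, Nat.sub_zero, Nat.succ_sub_one] <;>
    push_cast <;> ring


noncomputable def Ssum (n : ℕ) : ℝ[X] :=
  ∑ k ∈ Finset.range (n+1), C (gc n k) * ((1+X)^k * (1-X)^(n-k))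


lemma Ssum_step (n : ℕ) (hn : 1 ≤ n) :
    (1+X)*(1-X) * (2*(2*(n:ℝ[X])*X^2+3*X-1) * Ssum n
      + 4*X*(1-(X:ℝ[X])^2) * derivative (Ssum n))
    = (1+X)*(1-X) * Ssum (n+1) := by
  set f : ℕ → ℝ[X] :=
    fun k => C (2*(n:ℝ)-4-4*(k:ℝ)) * C (gc n k) * ((1+X)^(k+1)*(1-X)^(n-k+2)) with hf
  set s : ℕ → ℝ[X] :=
    fun k => C (4*(k:ℝ)+2-2*(n:ℝ)) * C (gc n k) * ((1+X)^(k+2)*(1-X)^(n-k+1)) with hs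
  have hder : derivative (Ssum n)
      = ∑ k ∈ Finset.range (n+1), C (gc n k) * derivative ((1+X)^k * (1-X)^(n-k)) := by
    rw [Ssum, derivative_sum]
    exact Finset.sum_congr rfl fun k _ => by rw [derivative_C_mul]
  have hL : (1+X)*(1-X) * (2*(2*(n:ℝ[X])*X^2+3*X-1) * Ssum n
      + 4*X*(1-(X:ℝ[X])^2) * derivative (Ssum n))
      = ∑ k ∈ Finset.range (n+1), (f k + s k) := by
    rw [hder, Ssum, Finset.mul_sum, Finset.mul_sum, ← Finset.sum_add_distrib, Finset.mul_sum]
    refine Finset.sum_congr rfl fun k hk => ?_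
    have hkn : k ≤ n := by simpa [Nat.lt_succ_iff] using hk
    have hcast : ((n:ℝ[X])) = ((k:ℝ[X]) + (((n-k:ℕ)):ℝ[X])) := by
      rw [← Nat.cast_add]; congr 1; omega
    have hcr : (((n-k:ℕ)):ℝ) = (n:ℝ) - (k:ℝ) := by
      push_cast [Nat.cast_sub hkn]; ring
    have step1 : (1+X)*(1-X) * (2*(2*(n:ℝ[X])*X^2+3*X-1) * (C (gc n k) * ((1+X)^k*(1-X)^(n-k)))
        + 4*X*(1-(X:ℝ[X])^2) * (C (gc n k) * derivative ((1+X)^k * (1-X)^(n-k))))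
        = C (gc n k) * ((1+X)*(1-X) * (2*(2*((k:ℝ[X])+(((n-k:ℕ)):ℝ[X]))*X^2+3*X-1)
            * ((1+X)^k*(1-X)^(n-k))
            + 4*X*(1-(X:ℝ[X])^2) * derivative ((1+X)^k*(1-X)^(n-k)))) := by
      rw [← hcast]; ring
    rw [step1, term_id k (n-k)]
    have ha' : (2*(((n-k:ℕ)):ℝ)-2*(k:ℝ)-4) = (2*(n:ℝ)-4-4*(k:ℝ)) := by rw [hcr]; ring
    have hb' : (2*(k:ℝ)-2*(((n-k:ℕ)):ℝ)+2) = (4*(k:ℝ)+2-2*(n:ℝ)) := by rw [hcr]; ring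
    rw [ha', hb']
    simp only [hf, hs]
    ring
  have hhk : ∀ k, (1+X)*(1-X) * (C (gc (n+1) k) * ((1+X)^k*(1-X)^(n+1-k)))
      = C (gc (n+1) k) * ((1+X)^(k+1) * (1-X)^(n+1-k+1)) := fun k => by ring
  have hR : (1+X)*(1-X) * Ssum (n+1) = ∑ k ∈ Finset.range (n+1), (f k + s k) := by
    rw [Ssum, Finset.mul_sum]
    rw [Finset.sum_congr rfl (fun k _ => hhk k)]
    rw [Finset.sum_range_succ']
    have hsplit : ∀ k ∈ Finset.range (n+1),
        C (gc (n+1) (k+1)) * ((1+X)^(k+1+1)*(1-X)^(n+1-(k+1)+1))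
        = f (k+1) + s k := by
      intro k hk
      have hkn : k ≤ n := by simpa [Nat.lt_succ_iff] using hk
      rw [gc_rec n k hn, C_add, C_mul, C_mul, add_mul]
      congr 1
      · simp only [hf]
        rcases Nat.lt_or_ge k n with h | h
        · have e1 : n+1-(k+1)+1 = n-(k+1)+2 := by omega
          rw [e1]; push_cast; ring
        · have hz : gc n (k+1) = 0 := gc_top n (k+1) hn (by omega)
          rw [hz]; simp
      · simp only [hs]
        have e1 : n+1-(k+1)+1 = n-k+1 := by omega
        rw [e1]; push_cast; ring
    rw [Finset.sum_congr rfl hsplit]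
    have h0 : C (gc (n+1) 0) * ((1+X)^(0+1)*(1-X)^(n+1-0+1)) = f 0 := by
      rw [gc_rec0 n hn, C_mul]; simp only [hf]; push_cast; norm_num
    have hfsum : (∑ k ∈ Finset.range (n+1), f (k+1)) + f 0 = ∑ k ∈ Finset.range (n+1), f k := by
      have hh1 := Finset.sum_range_succ' f (n+1)
      have hh2 := Finset.sum_range_succ f (n+1)
      have hh3 : f (n+1) = 0 := by
        simp only [hf]
        rw [gc_top n (n+1) hn (by omega)]
        simp
      rw [hh3, add_zero] at hh2
      rw [← hh2, hh1]
    rw [h0]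
    rw [Finset.sum_add_distrib, Finset.sum_add_distrib]
    linear_combination hfsum
  rw [hL, hR]


lemma npc {a b : ℕ} (h : a % 2 = b % 2) : (-1:ℝ)^a = (-1)^b := by
  rcases Nat.even_or_odd a with ha | ha
  · have hb : Even b := Nat.even_iff.mpr (by have := Nat.even_iff.mp ha; omega)
    rw [ha.neg_one_pow, hb.neg_one_pow]
  · have hb : Odd b := Nat.odd_iff.mpr (by have := Nat.odd_iff.mp ha; omega)
    rw [ha.neg_one_pow, hb.neg_one_pow]

lemma gc_bot : ∀ n, 1 ≤ n → ∀ k, k < (n-1)/2 → gc n k = 0 := by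
  intro n
  induction n with
  | zero => omega
  | succ n ih =>
    intro _ k hk
    rcases Nat.lt_or_ge n 1 with h1 | h1
    · interval_cases n <;> omega
    · match k with
      | 0 =>
        rw [gc_rec0 n h1]
        rcases Nat.lt_or_ge 0 ((n-1)/2) with h2 | h2
        · rw [ih h1 0 h2, mul_zero]
        · -- (n-1)/2 = 0 and 0 < (n+1-1)/2 : n = 2
          have : n = 2 := by omega
          subst this
          norm_num
      | (j+1) =>
        rw [gc_rec n j h1]
        rcases Nat.lt_or_ge (j+1) ((n-1)/2) with h2 | h2
        · rw [ih h1 (j+1) h2, ih h1 j (by omega), mul_zero, mul_zero, add_zero]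
        · -- j+1 = (n-1)/2 and j+1 < (n+1-1)/2 : n even, n = 2(j+1)+2
          have hn2 : n = 2*(j+1)+2 := by omega
          have hc : (2*(n:ℝ) - 4 - 4*((j:ℝ)+1)) = 0 := by
            have : (n:ℝ) = 2*((j:ℝ)+1)+2 := by exact_mod_cast congrArg (Nat.cast (R := ℝ)) hn2
            rw [this]; ring
          rw [hc, ih h1 j (by omega), zero_mul, mul_zero, add_zero]

lemma npc' {a b : ℕ} (h : a % 2 ≠ b % 2) : (-1:ℝ)^a = -(-1)^b := by
  rw [npc (show a % 2 = (b+1) % 2 by omega), pow_succ]; ring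

lemma gc_sign : ∀ n, 1 ≤ n →
    (∀ k, (n-1)/2 ≤ k → k ≤ n → 0 < (-1:ℝ)^(n+k) * gc n k) ∧
    ((-1:ℝ)^(n+(n-1)/2) * gc n ((n-1)/2)
      < (if n % 2 = 1 then 6 else 2) * ((-1:ℝ)^(n+(n-1)/2+1) * gc n ((n-1)/2+1))) := by
  intro N hN
  induction N, hN using Nat.le_induction with
  | base =>
    constructor
    · intro k _ hk2
      interval_cases k <;> norm_num [gc]
    · norm_num [gc]
  | succ n hn IH =>
    obtain ⟨S, D⟩ := IH
    rcases Nat.even_or_odd n with he | ho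
    · -- EVEN case : n = 2m+2
      obtain ⟨t, ht⟩ := he
      obtain ⟨m, hm⟩ : ∃ m, n = 2*m+2 := ⟨t-1, by omega⟩
      have hmn : (n-1)/2 = m := by omega
      have hmn1 : (n+1-1)/2 = m+1 := by omega
      rw [hmn] at S D
      rw [if_neg (by omega)] at D
      rw [hmn1, if_pos (by omega)]
      have hnr : (n:ℝ) = 2*(m:ℝ)+2 := by exact_mod_cast congrArg (Nat.cast (R := ℝ)) hm
      have ha := S m (le_refl m) (by omega)
      have hb := S (m+1) (by omega) (by omega)
      have hc := S (m+2) (by omega) (by omega)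
      rw [npc' (show (n+(m+1)) % 2 ≠ (n+m) % 2 by omega)] at hb
      rw [npc (show (n+(m+2)) % 2 = (n+m) % 2 by omega)] at hc
      rw [npc' (show (n+m+1) % 2 ≠ (n+m) % 2 by omega)] at D
      have key : ∀ j, m ≤ j → j ≤ n → 0 < (-1:ℝ)^(n+1+(j+1)) * gc (n+1) (j+1) := by
        intro j hj1 hj2
        rw [gc_rec n j hn]
        rcases Nat.eq_or_lt_of_le hj1 with rfl | hjm
        · -- j = m
          rw [npc (show (n+1+(m+1)) % 2 = (n+m) % 2 by omega)]
          nlinarith [ha, hb, D]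
        · -- m < j
          have hjr : (m:ℝ)+1 ≤ (j:ℝ) := by exact_mod_cast hjm
          have hp := S j (by omega) (by omega)
          have hα : 2*(n:ℝ)-4-4*((j:ℝ)+1) ≤ -8 := by rw [hnr]; linarith
          have hβ : 0 < 4*((j:ℝ)+1)-2*(n:ℝ)-2 := by rw [hnr]; linarith
          have hq : 0 ≤ -((-1:ℝ)^(n+j)) * gc n (j+1) := by
            rcases Nat.lt_or_ge j n with hj3 | hj3
            · have hs := S (j+1) (by omega) (by omega)
              rw [npc' (show (n+(j+1)) % 2 ≠ (n+j) % 2 by omega)] at hs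
              linarith
            · rw [gc_top n (j+1) hn (by omega)]
              simp
          rw [npc (show (n+1+(j+1)) % 2 = (n+j) % 2 by omega)]
          nlinarith [hp, hq, mul_pos hβ hp,
            mul_nonneg (show (0:ℝ) ≤ -(2*(n:ℝ)-4-4*((j:ℝ)+1)) by linarith) hq]
      constructor
      · intro k hk1 hk2
        match k with
        | 0 => omega
        | (j+1) => exact key j (by omega) (by omega)
      · -- dominance for n+1 (odd row, bottom m+1)
        have hA : gc (n+1) (m+1) = -4 * gc n (m+1) + -2 * gc n m := by
          rw [gc_rec n m hn]; push_cast [hnr]; ring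
        have hB : gc (n+1) (m+1+1) = -8 * gc n (m+1+1) + 2 * gc n (m+1) := by
          rw [gc_rec n (m+1) hn]; push_cast [hnr]; ring
        rw [show m+2 = m+1+1 from by omega] at hc
        rw [hA, hB,
            npc (show (n+1+(m+1)) % 2 = (n+m) % 2 by omega),
            npc' (show (n+1+(m+1)+1) % 2 ≠ (n+m) % 2 by omega)]
        nlinarith [ha, hb, hc, D]
    · -- ODD case : n = 2m+1
      obtain ⟨m, hm⟩ := ho
      have hmn : (n-1)/2 = m := by omega
      have hmn1 : (n+1-1)/2 = m := by omega
      rw [hmn] at S D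
      rw [if_pos (by omega)] at D
      rw [hmn1, if_neg (by omega)]
      have hnr : (n:ℝ) = 2*(m:ℝ)+1 := by exact_mod_cast congrArg (Nat.cast (R := ℝ)) hm
      have ha := S m (le_refl m) (by omega)
      have hb := S (m+1) (by omega) (by omega)
      rw [npc' (show (n+(m+1)) % 2 ≠ (n+m) % 2 by omega)] at hb
      rw [npc' (show (n+m+1) % 2 ≠ (n+m) % 2 by omega)] at D
      have key : ∀ j, m ≤ j+1 → j+1 ≤ n+1 → 0 < (-1:ℝ)^(n+1+(j+1)) * gc (n+1) (j+1) := by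
        intro j hj1 hj2
        rw [gc_rec n j hn]
        rcases Nat.lt_or_ge j m with hjm | hjm
        · -- j+1 = m
          have hjm' : j+1 = m := by omega
          have hz : gc n j = 0 := gc_bot n hn j (by omega)
          rw [hz, hjm', npc' (show (n+1+m) % 2 ≠ (n+m) % 2 by omega)]
          have hα : 2*(n:ℝ)-4-4*((j:ℝ)+1) = -2 := by
            have hjr : (j:ℝ)+1 = (m:ℝ) := by exact_mod_cast congrArg (Nat.cast (R := ℝ)) hjm'
            rw [hnr, ← hjr]; ring
          rw [hα]
          nlinarith [ha]
        · -- m ≤ j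
          have hjr : (m:ℝ) ≤ (j:ℝ) := by exact_mod_cast hjm
          have hp := S j (by omega) (by omega)
          have hα : 2*(n:ℝ)-4-4*((j:ℝ)+1) ≤ -6 := by rw [hnr]; linarith
          have hβ : 0 ≤ 4*((j:ℝ)+1)-2*(n:ℝ)-2 := by rw [hnr]; linarith
          rw [npc (show (n+1+(j+1)) % 2 = (n+j) % 2 by omega)]
          rcases Nat.lt_or_ge j n with hj3 | hj3
          · have hq2 := S (j+1) (by omega) (by omega)
            rw [npc' (show (n+(j+1)) % 2 ≠ (n+j) % 2 by omega)] at hq2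
            nlinarith [hp, hq2, mul_nonneg hβ hp.le,
              mul_pos (show (0:ℝ) < -(2*(n:ℝ)-4-4*((j:ℝ)+1)) by linarith) hq2]
          · have hz : gc n (j+1) = 0 := gc_top n (j+1) hn (by omega)
            have hβ' : 0 < 4*((j:ℝ)+1)-2*(n:ℝ)-2 := by
              have : (n:ℝ) ≤ (j:ℝ) := by exact_mod_cast hj3
              linarith
            rw [hz]
            nlinarith [hp, mul_pos hβ' hp]
      constructor
      · intro k hk1 hk2
        match k with
        | 0 =>
          have hn1 : n = 1 := by omega
          subst hn1
          norm_num [gc]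
        | (j+1) => exact key j (by omega) (by omega)
      · -- dominance for n+1 (even row, bottom m)
        rcases Nat.eq_zero_or_pos m with hm0 | hm0
        · have hn1 : n = 1 := by omega
          subst hn1
          rw [hm0]
          norm_num [gc]
        · obtain ⟨m', rfl⟩ : ∃ m', m = m'+1 := ⟨m-1, by omega⟩
          have hA : gc (n+1) (m'+1) = -2 * gc n (m'+1) := by
            rw [gc_rec n m' hn, gc_bot n hn m' (by omega)]
            push_cast [hnr]; ring
          have hB : gc (n+1) (m'+1+1) = -6 * gc n (m'+1+1) := by
            rw [gc_rec n (m'+1) hn]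
            push_cast [hnr]; ring
          rw [show (m'+1)+1 = m'+1+1 from rfl, hA, hB,
              npc' (show (n+1+(m'+1)) % 2 ≠ (n+(m'+1)) % 2 by omega),
              npc (show (n+1+(m'+1)+1) % 2 = (n+(m'+1)) % 2 by omega)]
          nlinarith [ha, hb, D]

lemma T_eq (T : ℕ → Polynomial ℝ) (h1 : T 1 = X)
    (hrec : ∀ n : ℕ, 1 ≤ n → T (n + 1) =
      (2 * (n : Polynomial ℝ) * X ^ 2 + 3 * X - 1) * T n + 2 * X * (1 - X ^ 2) * derivative (T n)) :
    ∀ n, 1 ≤ n → C ((2:ℝ))^n * T n = Ssum n := by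
  intro N hN
  induction N, hN using Nat.le_induction with
  | base =>
    rw [h1, Ssum]
    rw [Finset.sum_range_succ, Finset.sum_range_succ, Finset.sum_range_zero]
    norm_num [gc]
    rw [map_ofNat C 2]
    ring
  | succ n hn IH =>
    have hD : C ((2:ℝ))^n * derivative (T n) = derivative (Ssum n) := by
      have h := congrArg derivative IH
      rwa [← map_pow, derivative_C_mul, map_pow] at h
    have h3 : C (2:ℝ)^(n+1) * T (n+1)
        = 2*(2*(n:ℝ[X])*X^2+3*X-1) * Ssum n + 4*X*(1-(X:ℝ[X])^2) * derivative (Ssum n) := by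
      rw [hrec n hn, ← hD, ← IH, map_ofNat C 2]
      ring
    have hAB : ((1:ℝ[X])+X)*(1-X) ≠ 0 := by
      intro h
      have := congrArg (eval 0) h
      simp at this
    apply mul_left_cancel₀ hAB
    rw [h3]
    exact Ssum_step n hn

/-- For `n ≥ 1`, `(1+x)^{⌊(n-1)/2⌋}` divides the type `B` alternating run polynomial `T n`,
and this is exactly the multiplicity of the root `-1` in `T n`. -/
theorem typeB_run_multiplicity (T : ℕ → Polynomial ℝ) (h1 : T 1 = X)
    (hrec : ∀ n : ℕ, 1 ≤ n → T (n + 1) =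
      (2 * (n : Polynomial ℝ) * X ^ 2 + 3 * X - 1) * T n + 2 * X * (1 - X ^ 2) * derivative (T n))
    (n : ℕ) (hn : 1 ≤ n) :
    (1 + X) ^ ((n - 1) / 2) ∣ T n ∧ (T n).rootMultiplicity (-1) = (n - 1) / 2 := by
  set m := (n-1)/2 with hmdef
  have hmn : m ≤ n := by omega
  have hid := T_eq T h1 hrec n hn
  obtain ⟨S, _⟩ := gc_sign n hn
  have gm_pos := S m (le_refl m) hmn
  have gm_ne : gc n m ≠ 0 := by
    intro h
    rw [h, mul_zero] at gm_pos
    exact lt_irrefl 0 gm_pos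
  -- split Ssum
  have hW : Ssum n = (1+X)^m
      * (∑ k ∈ Finset.range (n+1-m), C (gc n (m+k)) * ((1+X)^k * (1-X)^(n-(m+k)))) := by
    have hsub : Finset.Ico m (n+1) ⊆ Finset.range (n+1) := by
      intro x hx
      simp only [Finset.mem_Ico] at hx
      exact Finset.mem_range.mpr hx.2
    have hzero : ∀ x ∈ Finset.range (n+1), x ∉ Finset.Ico m (n+1) →
        C (gc n x) * ((1+X)^x * (1-X)^(n-x)) = 0 := by
      intro x hx hx2
      have hxm : x < m := by
        simp only [Finset.mem_range] at hx
        simp only [Finset.mem_Ico] at hx2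
        omega
      rw [gc_bot n hn x hxm, C_0, zero_mul]
    rw [Ssum, ← Finset.sum_subset hsub hzero, Finset.sum_Ico_eq_sum_range,
      show n+1-m = n+1-m from rfl, Finset.mul_sum]
    refine Finset.sum_congr rfl fun k _ => ?_
    rw [pow_add]
    ring
  set W := ∑ k ∈ Finset.range (n+1-m), C (gc n (m+k)) * ((1+X)^k * (1-X)^(n-(m+k))) with hWdef
  have hWeval : W.eval (-1) = gc n m * 2^(n-m) := by
    have hz : ∀ b ∈ Finset.range (n+1-m), b ≠ 0 →
        eval (-1) (C (gc n (m+b)) * ((1+X)^b * (1-X)^(n-(m+b)))) = 0 := by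
      intro b _ hb
      simp [eval_pow, eval_mul, zero_pow hb]
    rw [hWdef, eval_finset_sum,
      Finset.sum_eq_single 0 hz (fun h => absurd (Finset.mem_range.mpr (by omega)) h)]
    rw [eval_mul, eval_mul, eval_pow, eval_pow, eval_sub, eval_add, eval_one, eval_X, eval_C]
    norm_num
  have hWne0 : W.eval (-1) ≠ 0 := by
    rw [hWeval]
    exact mul_ne_zero gm_ne (pow_ne_zero _ two_ne_zero)
  have hWne : W ≠ 0 := by
    intro h
    rw [h] at hWne0
    simp at hWne0
  have h1Xne : ((1:ℝ[X])+X) ≠ 0 := by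
    intro h
    have := congrArg (eval 0) h
    simp at this
  have hE : C ((2:ℝ))^n * T n = (1+X)^m * W := by rw [hid, hW]
  have h2n : ((2:ℝ)^n) ≠ 0 := by positivity
  constructor
  · refine ⟨C ((2:ℝ)^n)⁻¹ * W, ?_⟩
    have : T n = C ((2:ℝ)^n)⁻¹ * ((1+X)^m * W) := by
      rw [← hE, ← C_pow, ← mul_assoc, ← C_mul, inv_mul_cancel₀ h2n, C_1, one_mul]
    rw [this]
    ring
  · have hT0 : T n ≠ 0 := by
      intro h
      have h2 : (1+X)^m * W = 0 := by rw [← hE, h, mul_zero]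
      exact absurd h2 (mul_ne_zero (pow_ne_zero _ h1Xne) hWne)
    have hCne : (C ((2:ℝ)^n)) ≠ 0 := by
      simp [h2n]
    have e1 : rootMultiplicity (-1) (C ((2:ℝ))^n * T n) = rootMultiplicity (-1) (T n) := by
      rw [← C_pow, rootMultiplicity_mul (mul_ne_zero hCne hT0), rootMultiplicity_C, zero_add]
    have h1X : ((1:ℝ[X])+X) = X - C (-1) := by
      rw [show C (-1:ℝ) = -1 by simp]
      ring
    have e2 : rootMultiplicity (-1) ((1+X)^m * W) = m := by
      rw [rootMultiplicity_mul (mul_ne_zero (pow_ne_zero _ h1Xne) hWne), h1X,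
        rootMultiplicity_X_sub_C_pow, rootMultiplicity_eq_zero (by simpa [IsRoot] using hWne0),
        add_zero]
    rw [← e1, hE, e2]
end

section
/- Let D_G be the derivation on ℝ[a,b,c] with D_G(a) = ab, D_G(b) = bc, D_G(c) = b². Then for n ≥ 1, D_G^{2k-1}(1/(ab)) = -((b+c)/(ab))(c²-b²)^{k-1} and D_G^{2k}(1/(ab)) = (c(b+c)/(ab))(c²-b²)^{k-1}, where D_G is extended to the localization at ab by the quotient rule. -/
/-- Iterated derivatives of `1/(ab)` under the derivation with `D a = ab`, `D b = bc`,
`D c = b²` (extended to a ring where `ab` is invertible, e.g. the localization at `ab`):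
`D^{2k-1}(1/(ab)) = -((b+c)/(ab))(c²-b²)^{k-1}` and
`D^{2k}(1/(ab)) = (c(b+c)/(ab))(c²-b²)^{k-1}` for `k ≥ 1`. -/
theorem grammar_inv_ab_iterates {A : Type*} [CommRing A] [Algebra ℝ A]
    (D : Derivation ℝ A A) (a b c : A) (u : Aˣ) (hu : (u : A) = a * b)
    (ha : D a = a * b) (hb : D b = b * c) (hc : D c = b ^ 2)
    (k : ℕ) (hk : 1 ≤ k) :
    (⇑D)^[2 * k - 1] ((↑u⁻¹ : A)) = -((b + c) * (↑u⁻¹ : A) * (c ^ 2 - b ^ 2) ^ (k - 1)) ∧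
    (⇑D)^[2 * k] ((↑u⁻¹ : A)) = c * (b + c) * (↑u⁻¹ : A) * (c ^ 2 - b ^ 2) ^ (k - 1) := by
  have hDu : D ((↑u : A)) = (↑u : A) * (b + c) := by
    rw [hu, D.leibniz, ha, hb, smul_eq_mul, smul_eq_mul]; ring
  have hui : (↑u⁻¹ : A) * (↑u : A) = 1 := u.inv_mul
  have hDi : D ((↑u⁻¹ : A)) = -((b + c) * (↑u⁻¹ : A)) := by
    have h0 : D ((↑u : A) * (↑u⁻¹ : A)) = 0 := by
      rw [u.mul_inv]; simpa using D.map_one_eq_zero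
    rw [D.leibniz, smul_eq_mul, smul_eq_mul, hDu] at h0
    have h1 : (↑u : A) * D (↑u⁻¹ : A) = -((↑u⁻¹ : A) * ((↑u : A) * (b + c))) :=
      eq_neg_of_add_eq_zero_left h0
    calc D ((↑u⁻¹ : A)) = ((↑u⁻¹ : A) * ↑u) * D ((↑u⁻¹ : A)) := by rw [hui, one_mul]
      _ = (↑u⁻¹ : A) * ((↑u : A) * D ((↑u⁻¹ : A))) := by ring
      _ = (↑u⁻¹ : A) * (-((↑u⁻¹ : A) * ((↑u : A) * (b + c)))) := by rw [h1]
      _ = -((b + c) * (((↑u⁻¹ : A) * ↑u) * (↑u⁻¹ : A))) := by ring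
      _ = -((b + c) * (↑u⁻¹ : A)) := by rw [hui, one_mul]
  have hs : D (c ^ 2 - b ^ 2) = 0 := by
    rw [map_sub, pow_two, pow_two, D.leibniz, D.leibniz, hb, hc]
    simp only [smul_eq_mul]; ring
  have hsm : ∀ m : ℕ, D ((c ^ 2 - b ^ 2) ^ m) = 0 := by
    intro m
    induction m with
    | zero => simpa using D.map_one_eq_zero
    | succ n ih => rw [pow_succ, D.leibniz, ih, hs]; simp
  induction k, hk using Nat.le_induction with
  | base =>
    constructor
    · simpa using hDi
    · show (⇑D)^[2] ((↑u⁻¹ : A)) = _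
      rw [Function.iterate_succ_apply', Function.iterate_one, hDi, map_neg, D.leibniz,
        map_add, hb, hc, hDi]
      simp only [smul_eq_mul, Nat.sub_self, pow_zero]
      ring
  | succ n hn ih =>
    obtain ⟨ih1, ih2⟩ := ih
    have hpow : (c ^ 2 - b ^ 2) ^ (n - 1) * (c ^ 2 - b ^ 2) = (c ^ 2 - b ^ 2) ^ n := by
      rw [← pow_succ, Nat.sub_add_cancel hn]
    have key : (⇑D)^[2 * n + 1] ((↑u⁻¹ : A))
        = -((b + c) * (↑u⁻¹ : A) * (c ^ 2 - b ^ 2) ^ n) := by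
      rw [Function.iterate_succ_apply', ih2, D.leibniz, D.leibniz, D.leibniz, map_add,
        hb, hc, hDi, hsm, ← hpow]
      simp only [smul_eq_mul]
      ring
    constructor
    · have h2 : 2 * (n + 1) - 1 = 2 * n + 1 := by omega
      rw [h2, key, Nat.add_sub_cancel]
    · have h2 : 2 * (n + 1) = (2 * n + 1) + 1 := by ring
      rw [h2, Function.iterate_succ_apply', key, Nat.add_sub_cancel, map_neg, D.leibniz,
        D.leibniz, map_add, hb, hc, hDi, hsm]
      simp only [smul_eq_mul]
      ring
end

section
/- Let D_G be the derivation on ℝ[a,b,c] with D_G(a) = abc, D_G(b) = bc², D_G(c) = b²c, extended to the localization at bc. Then for all k ≥ 1: D_G^{2k-1}(1/(bc)) = -((b²+c²)/(bc))·(b²-c²)^{2k-2} and D_G^{2k}(1/(bc)) = (1/(bc))·(b²-c²)^{2k}. -/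
/-- Iterated derivatives of `1/(bc)` under the derivation with `D a = abc`, `D b = bc²`,
`D c = b²c` (extended to a ring where `bc` is invertible, e.g. the localization at `bc`):
for `k ≥ 1`, `D^{2k-1}(1/(bc)) = -((b²+c²)/(bc))·(b²-c²)^{2k-2}` and
`D^{2k}(1/(bc)) = (1/(bc))·(b²-c²)^{2k}`. -/
theorem grammar_inv_bc_iterates {A : Type*} [CommRing A] [Algebra ℝ A]
    (D : Derivation ℝ A A) (a b c : A) (u : Aˣ) (hu : (u : A) = b * c)
    (ha : D a = a * b * c) (hb : D b = b * c ^ 2) (hc : D c = b ^ 2 * c)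
    (k : ℕ) (hk : 1 ≤ k) :
    (⇑D)^[2 * k - 1] ((↑u⁻¹ : A)) =
        -((b ^ 2 + c ^ 2) * (↑u⁻¹ : A) * (b ^ 2 - c ^ 2) ^ (2 * k - 2)) ∧
    (⇑D)^[2 * k] ((↑u⁻¹ : A)) = (↑u⁻¹ : A) * (b ^ 2 - c ^ 2) ^ (2 * k) := by
  have h1 : (↑u⁻¹ : A) * ↑u = 1 := by exact_mod_cast u.inv_mul
  have hQ : D (b ^ 2 - c ^ 2) = 0 := by
    have h2 : D (b ^ 2) = 2 * b ^ 2 * c ^ 2 := by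
      rw [pow_two, D.leibniz, hb]; simp [smul_eq_mul]; ring
    have h3 : D (c ^ 2) = 2 * b ^ 2 * c ^ 2 := by
      rw [pow_two, D.leibniz, hc]; simp [smul_eq_mul]; ring
    rw [map_sub, h2, h3, sub_self]
  have hQpow : ∀ n : ℕ, D ((b ^ 2 - c ^ 2) ^ n) = 0 := by
    intro n; rw [Derivation.leibniz_pow, hQ]; simp
  have hDu : D (↑u : A) = (b ^ 2 + c ^ 2) * ↑u := by
    rw [hu, D.leibniz, hb, hc]; simp [smul_eq_mul]; ring
  have key : (↑u : A) * D ↑u⁻¹ + (↑u⁻¹ : A) * ((b ^ 2 + c ^ 2) * ↑u) = 0 := by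
    have h0 : D ((↑u⁻¹ : A) * ↑u) = 0 := by rw [h1, D.map_one_eq_zero]
    rw [D.leibniz] at h0
    simp only [smul_eq_mul] at h0
    rw [hDu] at h0
    linear_combination h0
  have hDuinv : D (↑u⁻¹ : A) = -((b ^ 2 + c ^ 2) * ↑u⁻¹) := by
    linear_combination (↑u⁻¹ : A) * key - (D (↑u⁻¹ : A) + (b ^ 2 + c ^ 2) * ↑u⁻¹) * h1
  have hS : D (b ^ 2 + c ^ 2) = 4 * b ^ 2 * c ^ 2 := by
    have h2 : D (b ^ 2) = 2 * b ^ 2 * c ^ 2 := by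
      rw [pow_two, D.leibniz, hb]; simp [smul_eq_mul]; ring
    have h3 : D (c ^ 2) = 2 * b ^ 2 * c ^ 2 := by
      rw [pow_two, D.leibniz, hc]; simp [smul_eq_mul]; ring
    rw [map_add, h2, h3]; ring
  have hD2 : D (-((b ^ 2 + c ^ 2) * (↑u⁻¹ : A))) = ↑u⁻¹ * (b ^ 2 - c ^ 2) ^ 2 := by
    rw [map_neg, D.leibniz, hS, hDuinv]
    simp only [smul_eq_mul]
    ring
  have main : ∀ n : ℕ,
      (⇑D)^[2 * n + 1] ((↑u⁻¹ : A)) = -((b ^ 2 + c ^ 2) * ↑u⁻¹ * (b ^ 2 - c ^ 2) ^ (2 * n)) ∧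
      (⇑D)^[2 * n + 2] ((↑u⁻¹ : A)) = ↑u⁻¹ * (b ^ 2 - c ^ 2) ^ (2 * n + 2) := by
    intro n
    induction n with
    | zero =>
      constructor
      · simpa using hDuinv
      · show (⇑D)^[2] _ = _
        rw [Function.iterate_succ_apply', Function.iterate_one, hDuinv]
        simpa using hD2
    | succ n ih =>
      obtain ⟨ih1, ih2⟩ := ih
      have e1 : (⇑D)^[2 * (n + 1) + 1] ((↑u⁻¹ : A)) = D ((⇑D)^[2 * n + 2] ↑u⁻¹) := by
        have h : 2 * (n + 1) + 1 = (2 * n + 2) + 1 := by ring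
        rw [h, Function.iterate_succ_apply']
      have e2 : (⇑D)^[2 * (n + 1) + 2] ((↑u⁻¹ : A)) = D ((⇑D)^[2 * (n + 1) + 1] ↑u⁻¹) := by
        have h : 2 * (n + 1) + 2 = (2 * (n + 1) + 1) + 1 := by ring
        rw [h, Function.iterate_succ_apply']
      constructor
      · rw [e1, ih2, D.leibniz, hQpow, hDuinv]
        simp only [smul_eq_mul, mul_zero, zero_add]
        ring
      · rw [e2, e1, ih2, D.leibniz, hQpow, hDuinv]
        simp only [smul_eq_mul, mul_zero, zero_add]
        have : D ((b ^ 2 - c ^ 2) ^ (2 * n + 2) * -((b ^ 2 + c ^ 2) * ↑u⁻¹)) =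
            (↑u⁻¹ : A) * (b ^ 2 - c ^ 2) ^ (2 * (n + 1) + 2) := by
          rw [D.leibniz, hQpow, hD2]
          simp only [smul_eq_mul, mul_zero, zero_add]
          ring
        rw [this]
  obtain ⟨m, rfl⟩ : ∃ m, k = m + 1 := ⟨k - 1, (Nat.succ_pred_eq_of_pos hk).symm⟩
  have e1 : 2 * (m + 1) - 1 = 2 * m + 1 := by omega
  have e2 : 2 * (m + 1) - 2 = 2 * m := by omega
  have e3 : 2 * (m + 1) = 2 * m + 2 := by omega
  rw [e1, e2, e3]
  exact main m
end

section
/- Let B_n(x) be the type B Eulerian polynomials (B_0 = 1, B_{n+1}(x) = (2nx + 1 + x)B_n(x) + 2x(1-x)B_n'(x)) and F_n(x) the alternating run polynomials of dual Stirling permutations (F_0 = 1, F_{n+1}(x) = (x+2nx²)F_n(x) + x(1-x²)F_n'(x)). Then for all n ≥ 0: F_{n+1}(x) = x B_n(x²) + n x F_n(x) − Σ_{r=2}^{n} C(n, r-2) F_{n-r+2}(−x) F_{r-1}(x). -/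
/-!
Both `x B_n(x²)` and the binomial convolution `Σ_k C(n,k) F_{n-k}(-x) F_{k+1}(x)` equal `x` at
`n = 0` and are carried from `n` to `n + 1` by `P ↦ 2(n+1)x²P + x(1-x²)P'`. For the convolution
this comes from Pascal's rule and the product rule
`F_m(-x) F_{j+1}(x) + F_{m+1}(-x) F_j(x) = 2(m+j)x² G + x(1-x²) G'` with `G = F_m(-x) F_j(x)`.
So the two agree, and the theorem is this identity with the terms `k = n` and `k = n - 1`,
namely `F_{n+1}(x)` and `-n x F_n(x)`, split off.
-/

open Polynomial Finset

namespace DualStirling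

variable {R : Type*} [CommRing R]

def IsTypeBEulerianRec (B : ℕ → R[X]) : Prop :=
  ∀ n : ℕ, B (n + 1) = (2 * (n : R[X]) * X + 1 + X) * B n + 2 * X * (1 - X) * derivative (B n)

def IsDualStirlingRunRec (F : ℕ → R[X]) : Prop :=
  ∀ n : ℕ, F (n + 1) = (X + 2 * (n : R[X]) * X ^ 2) * F n + X * (1 - X ^ 2) * derivative (F n)

noncomputable def step (n : ℕ) (P : R[X]) : R[X] :=
  2 * ((n + 1 : ℕ) : R[X]) * X ^ 2 * P + X * (1 - X ^ 2) * derivative P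

noncomputable def convolution (F : ℕ → R[X]) (n : ℕ) : R[X] :=
  ∑ ij ∈ antidiagonal n, (n.choose ij.1 : R[X]) * ((F ij.2).comp (-X) * F (ij.1 + 1))

theorem X_mul_comp_X_sq_succ {B : ℕ → R[X]} (hB : IsTypeBEulerianRec B) (n : ℕ) :
    X * (B (n + 1)).comp (X ^ 2) = step n (X * (B n).comp (X ^ 2)) := by
  rw [hB n, step]
  simp only [derivative_mul, derivative_comp, add_comp, mul_comp, X_comp, one_comp, sub_comp,
    natCast_comp, ofNat_comp, derivative_X, derivative_X_sq, C_ofNat]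
  push_cast
  ring

variable {F : ℕ → R[X]}

theorem F_one (hF0 : F 0 = 1) (hF : IsDualStirlingRunRec F) : F 1 = X := by
  rw [hF 0, hF0]; simp

theorem comp_neg_mul_succ_add_succ_comp_neg_mul (hF : IsDualStirlingRunRec F) (m j : ℕ) :
    (F m).comp (-X) * F (j + 1) + (F (m + 1)).comp (-X) * F j =
      2 * ((m + j : ℕ) : R[X]) * X ^ 2 * ((F m).comp (-X) * F j) +
        X * (1 - X ^ 2) * derivative ((F m).comp (-X) * F j) := by
  rw [hF j, hF m]
  simp only [derivative_mul, derivative_comp, add_comp, mul_comp, X_comp, one_comp,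
    sub_comp, pow_comp, natCast_comp, ofNat_comp, derivative_neg, derivative_X]
  push_cast
  ring

theorem convolution_succ (hF : IsDualStirlingRunRec F) (n : ℕ) :
    convolution F (n + 1) = step n (convolution F n) := by
  rw [convolution, sum_antidiagonal_choose_succ_mul fun i j => (F j).comp (-X) * F (i + 1),
    ← sum_add_distrib, convolution, step, mul_sum, derivative_sum, mul_sum, ← sum_add_distrib]
  refine sum_congr rfl fun ⟨i, j⟩ hij => ?_
  have hn : n = i + j := (HasAntidiagonal.mem_antidiagonal.mp hij).symm
  have hrec := comp_neg_mul_succ_add_succ_comp_neg_mul hF j (i + 1)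
  rw [show j + (i + 1) = n + 1 by omega] at hrec
  rw [← Nat.choose_symm_of_eq_add hn, derivative_natCast_mul]
  linear_combination (n.choose i : R[X]) * hrec

theorem convolution_eq {B : ℕ → R[X]} (hB0 : B 0 = 1) (hB : IsTypeBEulerianRec B)
    (hF0 : F 0 = 1) (hF : IsDualStirlingRunRec F) (n : ℕ) :
    convolution F n = X * (B n).comp (X ^ 2) := by
  induction n with
  | zero => simp [convolution, hF0, F_one hF0 hF, hB0]
  | succ n ih => rw [convolution_succ hF, ih, X_mul_comp_X_sq_succ hB]

theorem convolution_eq_sub_add_sum (hF0 : F 0 = 1) (hF : IsDualStirlingRunRec F) (n : ℕ) :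
    convolution F n = F (n + 1) - (n : R[X]) * X * F n +
      ∑ r ∈ Icc 2 n, (n.choose (r - 2) : R[X]) * (F (n - r + 2)).comp (-X) * F (r - 1) := by
  obtain _ | m := n
  · simp [convolution, hF0]
  have hIcc : ∑ r ∈ Icc 2 (m + 1),
      ((m + 1).choose (r - 2) : R[X]) * (F (m + 1 - r + 2)).comp (-X) * F (r - 1) =
      ∑ k ∈ range m, ((m + 1).choose k : R[X]) * ((F (m + 1 - k)).comp (-X) * F (k + 1)) := by
    rw [← Ico_add_one_right_eq_Icc, sum_Ico_eq_sum_range, show m + 1 + 1 - 2 = m by omega]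
    refine sum_congr rfl fun k hk => ?_
    rw [show m + 1 - (2 + k) + 2 = m + 1 - k by grind, show 2 + k - 2 = k by omega,
      show 2 + k - 1 = k + 1 by omega, mul_assoc]
  rw [convolution, Nat.sum_antidiagonal_eq_sum_range_succ
    (fun i j => ((m + 1).choose i : R[X]) * ((F j).comp (-X) * F (i + 1))), sum_range_succ,
    sum_range_succ, hIcc]
  simp only [Nat.choose_succ_self_right, Nat.choose_self, add_tsub_cancel_left, tsub_self,
    hF0, F_one hF0 hF, one_comp, X_comp, Nat.cast_add, Nat.cast_one]
  ring

end DualStirling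

open DualStirling in
/-- Connection between the type `B` Eulerian polynomials `B_n` and the alternating run
polynomials of dual Stirling permutations `F_n`: for all `n ≥ 0`,
`F_{n+1}(x) = x·B_n(x²) + n·x·F_n(x) − Σ_{r=2}^{n} C(n, r-2) F_{n-r+2}(−x) F_{r-1}(x)`. -/
theorem dual_stirling_typeB_eulerian (B : ℕ → Polynomial ℝ) (hB0 : B 0 = 1)
    (hBrec : ∀ n : ℕ, B (n + 1) =
      (2 * (n : Polynomial ℝ) * X + 1 + X) * B n + 2 * X * (1 - X) * derivative (B n))
    (F : ℕ → Polynomial ℝ) (hF0 : F 0 = 1)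
    (hFrec : ∀ n : ℕ, F (n + 1) =
      (X + 2 * (n : Polynomial ℝ) * X ^ 2) * F n + X * (1 - X ^ 2) * derivative (F n))
    (n : ℕ) :
    F (n + 1) = X * (B n).comp (X ^ 2) + (n : Polynomial ℝ) * X * F n -
      ∑ r ∈ Finset.Icc 2 n,
        (n.choose (r - 2) : Polynomial ℝ) * (F (n - r + 2)).comp (-X) * F (r - 1) := by
  rw [← convolution_eq hB0 hBrec hF0 hFrec n, convolution_eq_sub_add_sum hF0 hFrec n]
  ring
end
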